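/- arXiv:2506.09828 — 7 statements merged into one kernel-verified Lean document; each statement's English description precedes it below -/
import Mathlib

section
/- Let q(x) = max_{α ∈ A} (c(α) + ⟨α, x⟩) be a tropical polynomial on ℝ^d with finite nonempty exponent set A ⊆ ℝ^d. Then the total mass of the real Monge–Ampère measure of q equals the d-dimensional volume of its Newton polytope; that is, the Lebesgue measure of the set ⋃_{x ∈ ℝ^d} ∂q(x) of all subgradients of q equals the Lebesgue measure of convexHull(A). -/
open MeasureTheory InnerProductSpace

noncomputable section

/-- The subdifferential of a function `u : ℝ^d → ℝ` at a point `x`. -/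
def subgrad {d : ℕ} (u : EuclideanSpace ℝ (Fin d) → ℝ) (x : EuclideanSpace ℝ (Fin d)) :
    Set (EuclideanSpace ℝ (Fin d)) :=
  {ξ | ∀ y, ⟪ξ, y - x⟫_ℝ ≤ u y - u x}

/-- The total mass of the real Monge–Ampère measure of a tropical polynomial
`q(x) = max_{α ∈ A} (c(α) + ⟨α, x⟩)` equals the volume of its Newton polytope
`convexHull A`. -/
theorem totalMass_MongeAmpere_eq_volume_newtonPolytope
    (d : ℕ) (A : Finset (EuclideanSpace ℝ (Fin d))) (hA : A.Nonempty)
    (c : EuclideanSpace ℝ (Fin d) → ℝ) (q : EuclideanSpace ℝ (Fin d) → ℝ)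
    (hq : ∀ x, q x = A.sup' hA fun α => c α + ⟪α, x⟫_ℝ) :
    volume (⋃ x : EuclideanSpace ℝ (Fin d), subgrad q x)
      = volume (convexHull ℝ (A : Set (EuclideanSpace ℝ (Fin d)))) := by
  classical
  let E := EuclideanSpace ℝ (Fin d)
  set K : Set E := convexHull ℝ (A : Set (EuclideanSpace ℝ (Fin d))) with hK
  have hKconv : Convex ℝ K := convex_convexHull _ _
  have hKclosed : IsClosed K := (A.finite_toSet.isCompact_convexHull (𝕜 := ℝ)).isClosed
  -- lower bound on q by each affine piece
  have hq_ge : ∀ (α : E), α ∈ A → ∀ x, c α + ⟪α, x⟫_ℝ ≤ q x := by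
    intro α hα x
    rw [hq x]
    exact Finset.le_sup' (fun α => c α + ⟪α, x⟫_ℝ) hα
  -- Union of subgradients is contained in the Newton polytope
  have hUK : (⋃ x : E, subgrad q x) ⊆ K := by
    intro ξ hξ
    simp only [Set.mem_iUnion] at hξ
    obtain ⟨x, hx⟩ := hξ
    by_contra hξK
    obtain ⟨f, u, hfa, hfξ⟩ := geometric_hahn_banach_closed_point hKconv hKclosed hξK
    set v : E := (InnerProductSpace.toDual ℝ E).symm f with hv_def
    have hv : ∀ z : E, ⟪v, z⟫_ℝ = f z := fun z => InnerProductSpace.toDual_symm_apply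
    have key : ⟪ξ, (x + v) - x⟫_ℝ ≤ q (x + v) - q x := hx (x + v)
    have h1 : ⟪ξ, (x + v) - x⟫_ℝ = ⟪v, ξ⟫_ℝ := by
      rw [add_sub_cancel_left, real_inner_comm]
    have h2 : q (x + v) ≤ q x + u := by
      rw [hq (x + v)]
      apply Finset.sup'_le
      intro α hα
      have hα' : c α + ⟪α, x⟫_ℝ ≤ q x := hq_ge α hα x
      have hfα : f α < u := hfa α (subset_convexHull ℝ _ hα)
      have : ⟪α, x + v⟫_ℝ = ⟪α, x⟫_ℝ + ⟪v, α⟫_ℝ := by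
        rw [inner_add_right, real_inner_comm α v]
      rw [this, hv α]
      linarith
    rw [h1] at key
    rw [hv ξ] at key
    linarith
  -- Interior of the Newton polytope is contained in the union of subgradients
  have hIU : interior K ⊆ ⋃ x : E, subgrad q x := by
    intro ξ hξ
    obtain ⟨ε, hε, hball⟩ := Metric.mem_nhds_iff.1 (mem_interior_iff_mem_nhds.1 hξ)
    have hballK : Metric.ball ξ ε ⊆ K := hball
    set C : ℝ := A.sup' hA (fun α => -c α) with hC
    set g : E → ℝ := fun y => ⟪ξ, y⟫_ℝ - q y with hg
    clear_value C g
    have hq_cont : Continuous q := by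
      have : Continuous fun x : E => A.sup' hA fun α => c α + ⟪α, x⟫_ℝ := by
        apply continuous_iff_continuousAt.2
        intro x
        apply ContinuousAt.finset_sup'_apply hA
        intro α _
        exact (continuous_const.add (continuous_const.inner continuous_id)).continuousAt
      have hqe : q = fun x : E => A.sup' hA fun α => c α + ⟪α, x⟫_ℝ := funext hq
      rw [hqe]; exact this
    have hg_cont : Continuous g := by
      rw [hg]
      exact (continuous_const.inner continuous_id).sub hq_cont
    -- decay estimate
    have hdecay : ∀ y : E, y ≠ 0 → g y ≤ -(ε / 2) * ‖y‖ + C := by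
      intro y hy
      set v : E := ‖y‖⁻¹ • y with hv
      clear_value v
      have hny : (0 : ℝ) < ‖y‖ := norm_pos_iff.2 hy
      have hnv : ‖v‖ = 1 := by
        rw [hv, norm_smul, norm_inv, norm_norm, inv_mul_cancel₀ hny.ne']
      have hmem : ξ + (ε / 2) • v ∈ K := by
        apply hballK
        simp only [Metric.mem_ball, dist_eq_norm, add_sub_cancel_left, norm_smul, hnv, mul_one]
        rw [dist_eq_norm, add_sub_cancel_left, norm_smul, hnv, mul_one, Real.norm_eq_abs, abs_of_pos (by linarith)]
        linarith
      set B : ℝ := A.sup' hA (fun α => ⟪α, v⟫_ℝ) with hB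
      clear_value B
      have hKB : K ⊆ {z : E | ⟪v, z⟫_ℝ ≤ B} := by
        apply convexHull_min
        · intro α hα
          simp only [Set.mem_setOf_eq]
          rw [real_inner_comm, hB]
          exact Finset.le_sup' (fun α => ⟪α, v⟫_ℝ) hα
        · exact convex_halfSpace_le (innerₛₗ ℝ v).isLinear B
      have hξvB : ⟪v, ξ + (ε / 2) • v⟫_ℝ ≤ B := hKB hmem
      have hξv : ⟪ξ, v⟫_ℝ + ε / 2 ≤ B := by
        have : ⟪v, ξ + (ε / 2) • v⟫_ℝ = ⟪ξ, v⟫_ℝ + (ε / 2) * (⟪v, v⟫_ℝ) := by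
          rw [inner_add_right, inner_smul_right, real_inner_comm v ξ]
        rw [this, real_inner_self_eq_norm_sq, hnv] at hξvB
        simpa using hξvB
      obtain ⟨α, hαA, hαB⟩ := Finset.exists_mem_eq_sup' hA (fun α => ⟪α, v⟫_ℝ)
      rw [← hB] at hαB
      have hiv : ∀ z : EuclideanSpace ℝ (Fin d), ⟪z, y⟫_ℝ = ‖y‖ * ⟪z, v⟫_ℝ := by
        intro z
        rw [hv, real_inner_smul_right, ← mul_assoc, mul_inv_cancel₀ hny.ne', one_mul]
      have h1 : g y ≤ ⟪ξ, y⟫_ℝ - (c α + ⟪α, y⟫_ℝ) := by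
        have := hq_ge α hαA y
        simp only [hg]
        linarith
      rw [hiv ξ, hiv α] at h1
      have h3 : ⟪ξ, v⟫_ℝ - ⟪α, v⟫_ℝ ≤ -(ε / 2) := by
        have hB2 : B = ⟪α, v⟫_ℝ := hαB
        linarith
      have h4 : ‖y‖ * ⟪ξ, v⟫_ℝ - ‖y‖ * ⟪α, v⟫_ℝ ≤ ‖y‖ * (-(ε / 2)) := by
        have := mul_le_mul_of_nonneg_left h3 hny.le
        linarith [mul_sub ‖y‖ (⟪ξ, v⟫_ℝ) (⟪α, v⟫_ℝ)]
      have h5 : -c α ≤ C := by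
        rw [hC]; exact Finset.le_sup' (fun α => -c α) hαA
      have : -(ε / 2) * ‖y‖ = ‖y‖ * (-(ε / 2)) := by ring
      rw [this]
      linarith
    -- choose radius
    obtain ⟨R, hR0, hRbig⟩ : ∃ R : ℝ, 0 ≤ R ∧ 2 * (C - g 0) / ε < R :=
      ⟨max (2 * (C - g 0) / ε) 0 + 1, by positivity,
        lt_of_le_of_lt (le_max_left _ _) (lt_add_one _)⟩
    have hfar : ∀ y : E, R < ‖y‖ → g y < g 0 := by
      intro y hy
      have hy0 : y ≠ 0 := by
        intro h; rw [h, norm_zero] at hy; linarith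
      have h1 := hdecay y hy0
      have h2 : 2 * (C - g 0) / ε < ‖y‖ := lt_trans hRbig hy
      have h3 : 2 * (C - g 0) < ‖y‖ * ε := by
        rw [div_lt_iff₀ hε] at h2; linarith
      nlinarith
    obtain ⟨x, hxball, hxmax⟩ :=
      (isCompact_closedBall (0 : E) R).exists_isMaxOn
        ⟨0, by simpa using hR0⟩ hg_cont.continuousOn
    have hg0 : g 0 ≤ g x := hxmax (by simpa using hR0)
    have hgmax : ∀ y : E, g y ≤ g x := by
      intro y
      by_cases hyR : ‖y‖ ≤ R
      · exact hxmax (by simpa [Metric.mem_closedBall, dist_eq_norm] using hyR)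
      · have := hfar y (lt_of_not_ge hyR)
        linarith
    refine Set.mem_iUnion.2 ⟨x, ?_⟩
    intro y
    have h1 : ⟪ξ, y - x⟫_ℝ = ⟪ξ, y⟫_ℝ - ⟪ξ, x⟫_ℝ := inner_sub_right _ _ _
    have h2 := hgmax y
    simp only [hg] at h2
    linarith
  -- measure-theoretic conclusion
  have hfr : volume (frontier K) = 0 := hKconv.addHaar_frontier volume
  have hIvol : volume (interior K) = volume K := by
    apply le_antisymm (measure_mono interior_subset)
    calc volume K ≤ volume (interior K ∪ frontier K) := by
          apply measure_mono
          intro z hz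
          rcases Classical.em (z ∈ interior K) with h | h
          · exact Or.inl h
          · exact Or.inr ⟨subset_closure hz, h⟩
      _ ≤ volume (interior K) + volume (frontier K) := measure_union_le _ _
      _ = volume (interior K) := by rw [hfr, add_zero]
  exact le_antisymm (measure_mono hUK) (hIvol ▸ measure_mono hIU)

end
end

section
/- Tropical Bernstein–Khovanskii–Kushnirenko theorem (polarized form): let q_1, …, q_d be tropical polynomials on ℝ^d, q_i(x) = max_{α ∈ A_i} (c_i(α) + ⟨α, x⟩) with finite nonempty A_i ⊆ ℤ^d. Then the total mass of their mixed Monge–Ampère measure equals the corresponding polarization of volumes of Newton polytopes: Σ_{k=1}^{d} (−1)^{d−k} Σ_{1 ≤ j_1 < … < j_k ≤ d} MA[q_{j_1} + … + q_{j_k}](ℝ^d) = Σ_{k=1}^{d} (−1)^{d−k} Σ_{1 ≤ j_1 < … < j_k ≤ d} vol(convexHull(A_{j_1}) + … + convexHull(A_{j_k})), where the sums of sets on the right are Minkowski sums. -/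
open MeasureTheory InnerProductSpace Pointwise

noncomputable section

/-- The total mass of the real Monge–Ampère measure of `u`,
`MA[u](ℝ^d) = volume (⋃ x, ∂u(x))`. -/
def MAtotal {d : ℕ} (u : EuclideanSpace ℝ (Fin d) → ℝ) : ENNReal :=
  volume (⋃ x : EuclideanSpace ℝ (Fin d), subgrad u x)

section Aux

variable {d : ℕ}

local notation "E" => EuclideanSpace ℝ (Fin d)

/-- Upper bound: the union of subgradients is contained in `K`. -/
lemma subgrad_union_subset
    {q h : E → ℝ} {K : Set E}
    (hKconv : Convex ℝ K) (hKcl : IsClosed K)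
    (hK2 : ∀ v, ∃ ξ ∈ K, h v = ⟪ξ, v⟫_ℝ)
    (hsub : ∀ x y, h (x + y) ≤ h x + h y)
    (hhom : ∀ t : ℝ, 0 ≤ t → ∀ v, h (t • v) = t * h v)
    (M : ℝ) (hM : ∀ x, q x ≤ h x + M) :
    (⋃ x, subgrad q x) ⊆ K := by
  intro ξ hξ
  obtain ⟨x₀, hx₀⟩ := Set.mem_iUnion.1 hξ
  have hv : ∀ v, ⟪ξ, v⟫_ℝ ≤ h v := by
    intro v
    by_contra hcon
    push_neg at hcon
    set δ := ⟪ξ, v⟫_ℝ - h v with hδ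
    have hδpos : 0 < δ := sub_pos.mpr hcon
    set C := h x₀ + M - q x₀ with hC
    have hC0 : 0 ≤ C := by have := hM x₀; rw [hC]; linarith
    set t := (C + 1) / δ with ht
    have htpos : 0 < t := div_pos (by linarith) hδpos
    have key : t * ⟪ξ, v⟫_ℝ ≤ t * h v + C := by
      have h1 := hx₀ (x₀ + t • v)
      have h2 : x₀ + t • v - x₀ = t • v := by abel
      rw [h2, real_inner_smul_right] at h1
      have h3 : q (x₀ + t • v) ≤ h x₀ + t * h v + M := by
        calc q (x₀ + t • v) ≤ h (x₀ + t • v) + M := hM _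
          _ ≤ h x₀ + h (t • v) + M := by linarith [hsub x₀ (t • v)]
          _ = h x₀ + t * h v + M := by rw [hhom t htpos.le v]
      simp only [hC]
      linarith
    have : t * δ ≤ C := by simp only [hδ]; nlinarith
    rw [ht, div_mul_cancel₀ _ hδpos.ne'] at this
    linarith
  by_contra hmem
  obtain ⟨f, u, hfu, hub⟩ := geometric_hahn_banach_point_closed hKconv hKcl hmem
  set w := (InnerProductSpace.toDual ℝ (EuclideanSpace ℝ (Fin d))).symm f with hw
  have hwf : ∀ y, ⟪w, y⟫_ℝ = f y := fun y => InnerProductSpace.toDual_symm_apply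
  obtain ⟨ξ₀, hξ₀K, hξ₀⟩ := hK2 (-w)
  have h1 : ⟪ξ, -w⟫_ℝ ≤ h (-w) := hv (-w)
  have h2 : ⟪ξ, -w⟫_ℝ = -f ξ := by
    rw [real_inner_comm, inner_neg_left, hwf]
  have h3 : ⟪ξ₀, -w⟫_ℝ = -f ξ₀ := by
    rw [real_inner_comm, inner_neg_left, hwf]
  have h4 := hub ξ₀ hξ₀K
  have h5 : ⟪ξ, -w⟫_ℝ ≤ ⟪ξ₀, -w⟫_ℝ := by rw [← hξ₀]; exact h1
  rw [h2, h3] at h5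
  linarith

/-- Lower bound: the interior of `K` is contained in the union of subgradients. -/
lemma interior_subset_subgrad_union
    {q h : E → ℝ} {K : Set E}
    (hq : Continuous q)
    (hK1 : ∀ ξ ∈ K, ∀ v, ⟪ξ, v⟫_ℝ ≤ h v)
    (hh0 : h 0 = 0)
    (m : ℝ) (hm : ∀ x, h x + m ≤ q x) :
    interior K ⊆ ⋃ x, subgrad q x := by
  intro ξ hξ
  obtain ⟨ε, hε, hball⟩ := Metric.isOpen_iff.1 isOpen_interior ξ hξ
  have hballK : Metric.ball ξ ε ⊆ K := hball.trans interior_subset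
  have hcoer : ∀ v, ⟪ξ, v⟫_ℝ + (ε / 2) * ‖v‖ ≤ h v := by
    intro v
    rcases eq_or_ne v 0 with rfl | hv0
    · simp [hh0]
    · have hnv : (0:ℝ) < ‖v‖ := norm_pos_iff.2 hv0
      set s := ε / (2 * ‖v‖) with hs
      have hspos : 0 < s := div_pos hε (by positivity)
      have hmem : ξ + s • v ∈ K := by
        apply hballK
        rw [Metric.mem_ball, dist_eq_norm]
        have : ξ + s • v - ξ = s • v := by abel
        rw [this, norm_smul, Real.norm_eq_abs, abs_of_pos hspos]
        have hsv : s * ‖v‖ = ε / 2 := by rw [hs]; field_simp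
        rw [hsv]; linarith
      have := hK1 _ hmem v
      rw [inner_add_left, real_inner_smul_left, real_inner_self_eq_norm_sq] at this
      have hss : s * ‖v‖ ^ 2 = (ε / 2) * ‖v‖ := by
        rw [hs]; field_simp
      linarith [this, hss]
  set g : E → ℝ := fun x => ⟪ξ, x⟫_ℝ - q x with hg
  have hgc : Continuous g := (continuous_const.inner continuous_id).sub hq
  have hgbound : ∀ x, g x ≤ -((ε / 2) * ‖x‖) - m := by
    intro x
    have h1 := hcoer x
    have h2 := hm x
    simp only [hg]
    linarith
  set R := max 0 ((-m - g 0) / (ε / 2)) with hR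
  obtain ⟨x₀, hx₀mem, hx₀max⟩ := (isCompact_closedBall (0 : E) R).exists_isMaxOn
    ⟨0, by simp [hR]⟩ hgc.continuousOn
  have hglobal : ∀ y, g y ≤ g x₀ := by
    intro y
    by_cases hy : y ∈ Metric.closedBall (0 : E) R
    · exact hx₀max hy
    · have hyR : R < ‖y‖ := by
        rw [Metric.mem_closedBall, dist_zero_right, not_le] at hy; exact hy
      have h1 : (-m - g 0) / (ε / 2) < ‖y‖ := lt_of_le_of_lt (le_max_right _ _) hyR
      have h2 : -m - g 0 < (ε / 2) * ‖y‖ := by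
        rw [div_lt_iff₀ (by linarith : (0:ℝ) < ε / 2)] at h1
        linarith [h1]
      have h3 := hgbound y
      have h5 : -((ε / 2) * ‖y‖) - m < g 0 := by linarith [h2]
      have h4 : g y < g 0 := lt_of_le_of_lt h3 h5
      exact h4.le.trans (hx₀max (by simp [hR]))
  refine Set.mem_iUnion.2 ⟨x₀, fun y => ?_⟩
  have := hglobal y
  rw [inner_sub_right]
  simp only [hg] at this
  linarith

/-- Key lemma: equality of volumes. -/
lemma volume_subgrad_union
    {q h : E → ℝ} {K : Set E}
    (hq : Continuous q)
    (hKcomp : IsCompact K) (hKconv : Convex ℝ K)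
    (hK1 : ∀ ξ ∈ K, ∀ v, ⟪ξ, v⟫_ℝ ≤ h v)
    (hK2 : ∀ v, ∃ ξ ∈ K, h v = ⟪ξ, v⟫_ℝ)
    (hsub : ∀ x y, h (x + y) ≤ h x + h y)
    (hhom : ∀ t : ℝ, 0 ≤ t → ∀ v, h (t • v) = t * h v)
    (m M : ℝ) (hm : ∀ x, h x + m ≤ q x) (hM : ∀ x, q x ≤ h x + M) :
    volume (⋃ x, subgrad q x) = volume K := by
  have hh0 : h 0 = 0 := by
    have := hhom 0 le_rfl 0
    simpa using this
  have hup : (⋃ x, subgrad q x) ⊆ K :=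
    subgrad_union_subset hKconv hKcomp.isClosed hK2 hsub hhom M hM
  have hlow : interior K ⊆ ⋃ x, subgrad q x :=
    interior_subset_subgrad_union hq hK1 hh0 m hm
  refine le_antisymm (measure_mono hup) ?_
  have hfront : volume (frontier K) = 0 := hKconv.addHaar_frontier volume
  have : volume K ≤ volume (interior K) := by
    calc volume K ≤ volume (interior K ∪ frontier K) := by
          apply measure_mono
          intro x hx
          by_cases hxi : x ∈ interior K
          · exact Or.inl hxi
          · exact Or.inr ⟨subset_closure hx, hxi⟩
      _ ≤ volume (interior K) + volume (frontier K) := measure_union_le _ _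
      _ = volume (interior K) := by rw [hfront, add_zero]
  exact this.trans (measure_mono hlow)

end Aux

/-- Tropical Bernstein–Khovanskii–Kushnirenko theorem, polarized form: for tropical
polynomials `q_1, …, q_d` on `ℝ^d` with integral exponent sets `A_1, …, A_d`, the
polarization of total Monge–Ampère masses equals the polarization of volumes of
Minkowski sums of the Newton polytopes. -/
theorem tropical_BKK_polarized
    (d : ℕ) (A : Fin d → Finset (EuclideanSpace ℝ (Fin d))) (hA : ∀ i, (A i).Nonempty)
    (hint : ∀ i, ∀ α ∈ A i, ∀ j : Fin d, ∃ n : ℤ, α j = (n : ℝ))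
    (c : Fin d → EuclideanSpace ℝ (Fin d) → ℝ) (q : Fin d → EuclideanSpace ℝ (Fin d) → ℝ)
    (hq : ∀ i x, q i x = (A i).sup' (hA i) fun α => c i α + ⟪α, x⟫_ℝ) :
    ∑ S ∈ Finset.univ.powerset.filter (fun S : Finset (Fin d) => S.Nonempty),
        (-1 : ℝ) ^ (d - S.card) * (MAtotal (fun x => ∑ i ∈ S, q i x)).toReal
      = ∑ S ∈ Finset.univ.powerset.filter (fun S : Finset (Fin d) => S.Nonempty),
        (-1 : ℝ) ^ (d - S.card) *
          (volume (∑ i ∈ S, convexHull ℝ ((A i : Set (EuclideanSpace ℝ (Fin d)))))).toReal := by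
  apply Finset.sum_congr rfl
  intro S _
  -- the support function
  set h : EuclideanSpace ℝ (Fin d) → ℝ :=
    fun v => ∑ i ∈ S, (A i).sup' (hA i) (fun α => ⟪α, v⟫_ℝ) with hh
  set K : Set (EuclideanSpace ℝ (Fin d)) :=
    ∑ i ∈ S, convexHull ℝ ((A i : Set (EuclideanSpace ℝ (Fin d)))) with hK
  -- per-index facts
  have hinner_lin : ∀ v : EuclideanSpace ℝ (Fin d),
      IsLinearMap ℝ (fun ζ : EuclideanSpace ℝ (Fin d) => ⟪ζ, v⟫_ℝ) :=
    fun v => ⟨fun a b => inner_add_left a b v, fun t a => real_inner_smul_left a v t⟩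
  have f1 : ∀ (i : Fin d) (v ζ : EuclideanSpace ℝ (Fin d)),
      ζ ∈ convexHull ℝ ((A i : Set (EuclideanSpace ℝ (Fin d)))) →
      ⟪ζ, v⟫_ℝ ≤ (A i).sup' (hA i) (fun α => ⟪α, v⟫_ℝ) := by
    intro i v ζ hζ
    have : convexHull ℝ ((A i : Set (EuclideanSpace ℝ (Fin d)))) ⊆
        {ζ | ⟪ζ, v⟫_ℝ ≤ (A i).sup' (hA i) (fun α => ⟪α, v⟫_ℝ)} := by
      apply convexHull_min
      · intro α hα
        exact Finset.le_sup' (fun α => ⟪α, v⟫_ℝ) hα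
      · exact convex_halfSpace_le (hinner_lin v) _
    exact this hζ
  -- continuity of the sum of tropical polynomials
  have hqc : Continuous (fun x => ∑ i ∈ S, q i x) := by
    apply continuous_finset_sum
    intro i _
    have heq : q i =
        (A i).sup' (hA i) (fun α (x : EuclideanSpace ℝ (Fin d)) => c i α + ⟪α, x⟫_ℝ) := by
      funext x
      rw [hq i x, Finset.sup'_apply]
    rw [heq]
    apply Finset.sup'_induction
    · intro f hf g hg
      exact hf.max hg
    · intro α _
      exact continuous_const.add (continuous_const.inner continuous_id)
  -- compactness and convexity of K
  have hKcomp : IsCompact K := by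
    rw [hK]
    refine Finset.sum_induction _ IsCompact (fun a b ha hb => ha.add hb) ?_ ?_
    · have : (0 : Set (EuclideanSpace ℝ (Fin d))) = {0} := rfl
      rw [this]; exact isCompact_singleton
    · intro i _
      exact (A i).finite_toSet.isCompact_convexHull (𝕜 := ℝ)
  have hKconv : Convex ℝ K := by
    rw [hK]
    refine Finset.sum_induction _ (Convex ℝ) (fun a b ha hb => ha.add hb) ?_ ?_
    · have : (0 : Set (EuclideanSpace ℝ (Fin d))) = {0} := rfl
      rw [this]; exact convex_singleton 0
    · intro i _
      exact convex_convexHull ℝ _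
  -- K supports h from below and attains it
  have hK1 : ∀ ξ ∈ K, ∀ v, ⟪ξ, v⟫_ℝ ≤ h v := by
    intro ξ hξ v
    rw [hK] at hξ
    obtain ⟨g, hg, hsum⟩ := (Set.mem_finset_sum _ _ _).1 hξ
    rw [← hsum, sum_inner, hh]
    exact Finset.sum_le_sum fun i hi => f1 i v (g i) (hg hi)
  have hK2 : ∀ v, ∃ ξ ∈ K, h v = ⟪ξ, v⟫_ℝ := by
    intro v
    have hch : ∀ i : Fin d, ∃ α, α ∈ A i ∧
        (A i).sup' (hA i) (fun α => ⟪α, v⟫_ℝ) = ⟪α, v⟫_ℝ :=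
      fun i => Finset.exists_mem_eq_sup' (hA i) _
    choose α hαmem hαeq using hch
    refine ⟨∑ i ∈ S, α i, ?_, ?_⟩
    · rw [hK]
      exact Set.finset_sum_mem_finset_sum S _ _
        fun i _ => subset_convexHull ℝ _ (hαmem i)
    · rw [sum_inner, hh]
      exact Finset.sum_congr rfl fun i _ => hαeq i
  -- subadditivity and positive homogeneity of h
  have hsub : ∀ x y, h (x + y) ≤ h x + h y := by
    intro x y
    rw [hh, ← Finset.sum_add_distrib]
    refine Finset.sum_le_sum fun i _ => ?_
    refine Finset.sup'_le _ _ fun α hα => ?_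
    rw [inner_add_right]
    exact add_le_add (Finset.le_sup' (fun α : EuclideanSpace ℝ (Fin d) => ⟪α, x⟫_ℝ) hα)
      (Finset.le_sup' (fun α : EuclideanSpace ℝ (Fin d) => ⟪α, y⟫_ℝ) hα)
  have hhom : ∀ t : ℝ, 0 ≤ t → ∀ v, h (t • v) = t * h v := by
    intro t ht v
    rw [hh, Finset.mul_sum]
    refine Finset.sum_congr rfl fun i _ => ?_
    rw [Finset.comp_sup'_eq_sup'_comp (hA i) (fun r : ℝ => t * r)
      (fun x y => mul_max_of_nonneg x y ht)]
    refine Finset.sup'_congr _ rfl fun α _ => ?_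
    exact real_inner_smul_right α v t
  -- the sandwich
  set m : ℝ := ∑ i ∈ S, (A i).inf' (hA i) (c i) with hm'
  set M : ℝ := ∑ i ∈ S, (A i).sup' (hA i) (c i) with hM'
  have hmq : ∀ x, h x + m ≤ ∑ i ∈ S, q i x := by
    intro x
    rw [hh, hm', ← Finset.sum_add_distrib]
    refine Finset.sum_le_sum fun i _ => ?_
    obtain ⟨α, hαmem, hαeq⟩ := Finset.exists_mem_eq_sup' (hA i)
      (fun α : EuclideanSpace ℝ (Fin d) => ⟪α, x⟫_ℝ)
    rw [hq i x, hαeq]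
    calc ⟪α, x⟫_ℝ + (A i).inf' (hA i) (c i) ≤ ⟪α, x⟫_ℝ + c i α := by
          exact add_le_add_right (Finset.inf'_le _ hαmem) _
      _ = c i α + ⟪α, x⟫_ℝ := by ring
      _ ≤ _ := Finset.le_sup' (fun α => c i α + ⟪α, x⟫_ℝ) hαmem
  have hMq : ∀ x, ∑ i ∈ S, q i x ≤ h x + M := by
    intro x
    rw [hh, hM']
    have : ∑ i ∈ S, (A i).sup' (hA i) (fun α => ⟪α, x⟫_ℝ) + ∑ i ∈ S, (A i).sup' (hA i) (c i)
        = ∑ i ∈ S, ((A i).sup' (hA i) (fun α => ⟪α, x⟫_ℝ) + (A i).sup' (hA i) (c i)) := by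
      rw [Finset.sum_add_distrib]
    rw [this]
    refine Finset.sum_le_sum fun i _ => ?_
    rw [hq i x]
    refine Finset.sup'_le _ _ fun α hα => ?_
    have h1 : ⟪α, x⟫_ℝ ≤ (A i).sup' (hA i) (fun α => ⟪α, x⟫_ℝ) :=
      Finset.le_sup' (fun α : EuclideanSpace ℝ (Fin d) => ⟪α, x⟫_ℝ) hα
    have h2 : c i α ≤ (A i).sup' (hA i) (c i) := Finset.le_sup' (c i) hα
    linarith
  have key : MAtotal (fun x => ∑ i ∈ S, q i x) = volume K :=
    volume_subgrad_union hqc hKcomp hKconv hK1 hK2 hsub hhom m M hmq hMq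
  rw [key, hK]

end
end

section
/- Let α_1, β_1, …, α_d, β_d ∈ ℤ^d be such that the vectors α_1 − β_1, …, α_d − β_d are linearly independent over ℝ, and set q(x) = Σ_{i=1}^{d} max{⟨α_i, x⟩, ⟨β_i, x⟩}. Then the real Monge–Ampère measure of q is κ times the Dirac measure at the origin, where κ = |det M| and M is the matrix with columns α_1 − β_1, …, α_d − β_d (the volume of the zonotope Σ_i [α_i, β_i]); explicitly, for every Borel set E ⊆ ℝ^d, the Lebesgue measure of ⋃_{x ∈ E} ∂q(x) equals |det M| if 0 ∈ E and equals 0 if 0 ∉ E. -/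
open MeasureTheory InnerProductSpace Classical Pointwise

noncomputable section

/-- For `q(x) = Σ_i max{⟨α_i,x⟩, ⟨β_i,x⟩}` with `α_i − β_i` linearly independent integer
vectors, the real Monge–Ampère measure of `q` is `|det M| · δ_0`, where `M` is the matrix
with columns `α_i − β_i`. -/
theorem mongeAmpere_of_zonotope_tropical
    (d : ℕ) (α β : Fin d → Fin d → ℤ)
    (hli : LinearIndependent ℝ
      (fun i => (WithLp.toLp 2 (fun j => ((α i j - β i j : ℤ) : ℝ)) : EuclideanSpace ℝ (Fin d))))
    (q : EuclideanSpace ℝ (Fin d) → ℝ)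
    (hq : ∀ x, q x = ∑ i : Fin d,
        max (∑ j : Fin d, (α i j : ℝ) * x j) (∑ j : Fin d, (β i j : ℝ) * x j)) :
    ∀ E : Set (EuclideanSpace ℝ (Fin d)), MeasurableSet E →
      volume (⋃ x ∈ E, subgrad q x)
        = if (0 : EuclideanSpace ℝ (Fin d)) ∈ E then
            ENNReal.ofReal |(Matrix.of fun i j : Fin d => ((α j i - β j i : ℤ) : ℝ)).det|
          else 0 := by
  classical
  intro E _hE
  set N : Matrix (Fin d) (Fin d) ℝ := Matrix.of fun i j : Fin d => ((α j i - β j i : ℤ) : ℝ)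
    with hN
  set L : EuclideanSpace ℝ (Fin d) →ₗ[ℝ] EuclideanSpace ℝ (Fin d) := Matrix.toEuclideanLin N with hL
  set A : Fin d → EuclideanSpace ℝ (Fin d) := fun i => WithLp.toLp 2 (fun j => ((α i j : ℝ))) with hA
  set B : Fin d → EuclideanSpace ℝ (Fin d) := fun i => WithLp.toLp 2 (fun j => ((β i j : ℝ))) with hB
  have hinner : ∀ v w : EuclideanSpace ℝ (Fin d), ⟪v, w⟫_ℝ = ∑ j, v j * w j := fun v w => by
    simp [PiLp.inner_apply, RCLike.inner_apply, conj_trivial, mul_comm]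
  have hq' : ∀ x, q x = ∑ i, max ⟪A i, x⟫_ℝ ⟪B i, x⟫_ℝ := fun x => by
    rw [hq]
    exact Finset.sum_congr rfl fun i _ => by rw [hinner, hinner]
  have hq0 : q 0 = 0 := by
    simp [hq']
  -- key: subgradients at any point are subgradients at 0, with equality in direction x
  have keySub : ∀ x ξ, ξ ∈ subgrad q x → (∀ y, ⟪ξ, y⟫_ℝ ≤ q y) ∧ ⟪ξ, x⟫_ℝ = q x := by
    intro x ξ hξ
    have h2x : q ((2:ℝ) • x) = 2 * q x := by
      rw [hq', hq', Finset.mul_sum]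
      refine Finset.sum_congr rfl fun i _ => ?_
      rw [inner_smul_right, inner_smul_right]
      exact (mul_max_of_nonneg _ _ (by norm_num : (0:ℝ) ≤ 2)).symm
    have h0 := hξ 0
    rw [zero_sub, inner_neg_right, hq0] at h0
    have h2 := hξ ((2:ℝ) • x)
    rw [inner_sub_right, inner_smul_right, h2x] at h2
    have heq : ⟪ξ, x⟫_ℝ = q x := by linarith
    refine ⟨fun y => ?_, heq⟩
    have hy := hξ y
    rw [inner_sub_right] at hy
    linarith
  have subgrad0 : subgrad q 0 = {ξ | ∀ y, ⟪ξ, y⟫_ℝ ≤ q y} := by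
    ext ξ
    constructor
    · intro h y; have := h y; rwa [sub_zero, hq0, sub_zero] at this
    · intro h y; rw [sub_zero, hq0, sub_zero]; exact h y
  -- the zonotope
  set cube : Set (EuclideanSpace ℝ (Fin d)) := {t | ∀ i, t i ∈ Set.Icc (0:ℝ) 1} with hcubedef
  set Z : Set (EuclideanSpace ℝ (Fin d)) := (fun t => (∑ i, B i) + L t) '' cube with hZ
  have hLapp : ∀ (t : EuclideanSpace ℝ (Fin d)) (j : Fin d), (L t) j = ∑ i, N j i * t i := fun t j => rfl
  have hLinner : ∀ t v : EuclideanSpace ℝ (Fin d), ⟪(∑ i, B i) + L t, v⟫_ℝ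
      = ∑ i, (⟪B i, v⟫_ℝ + t i * (⟪A i, v⟫_ℝ - ⟪B i, v⟫_ℝ)) := by
    intro t v
    have hLv : ⟪L t, v⟫_ℝ = ∑ i, t i * (⟪A i, v⟫_ℝ - ⟪B i, v⟫_ℝ) := by
      rw [hinner]
      simp_rw [hLapp, Finset.sum_mul]
      rw [Finset.sum_comm]
      refine Finset.sum_congr rfl fun i _ => ?_
      rw [hinner, hinner, ← Finset.sum_sub_distrib, Finset.mul_sum]
      refine Finset.sum_congr rfl fun j _ => ?_
      simp only [hN, hA, hB, Matrix.of_apply, PiLp.toLp_apply]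
      push_cast
      ring
    rw [inner_add_left, sum_inner, hLv, ← Finset.sum_add_distrib]
  have hmax : ∀ a b t : ℝ, 0 ≤ t → t ≤ 1 → b + t * (a - b) ≤ max a b := by
    intro a b t h0 h1
    rcases le_total a b with h | h
    · rw [max_eq_right h]; nlinarith
    · rw [max_eq_left h]; nlinarith
  have hZsub : Z ⊆ subgrad q 0 := by
    rintro ξ ⟨t, ht, rfl⟩
    rw [subgrad0]
    intro y
    rw [hLinner, hq']
    exact Finset.sum_le_sum fun i _ => hmax _ _ _ (ht i).1 (ht i).2
  -- support point
  have hsupport : ∀ v : EuclideanSpace ℝ (Fin d), ∃ z ∈ Z, ⟪z, v⟫_ℝ = q v := by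
    intro v
    set t : EuclideanSpace ℝ (Fin d) := WithLp.toLp 2 (fun i => if ⟪B i, v⟫_ℝ ≤ ⟪A i, v⟫_ℝ then (1:ℝ) else 0) with htdef
    refine ⟨(∑ i, B i) + L t, ⟨t, fun i => ?_, rfl⟩, ?_⟩
    · have hti : t i = if ⟪B i, v⟫_ℝ ≤ ⟪A i, v⟫_ℝ then (1:ℝ) else 0 := rfl
      rw [hti]
      split_ifs <;> norm_num [Set.mem_Icc]
    · rw [hLinner, hq']
      refine Finset.sum_congr rfl fun i _ => ?_
      by_cases h : ⟪B i, v⟫_ℝ ≤ ⟪A i, v⟫_ℝ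
      · have ht1 : t i = 1 := if_pos h
        rw [ht1, max_eq_left h]; ring
      · have ht0 : t i = 0 := if_neg h
        rw [ht0, max_eq_right (le_of_not_ge h)]; ring
  -- convexity and compactness of Z
  have hcubeConv : Convex ℝ cube := by
    intro x hx y hy a b ha hb hab i
    have hxi := hx i
    have hyi := hy i
    have : (a • x + b • y) i = a * x i + b * y i := rfl
    rw [this]
    exact convex_Icc (0:ℝ) 1 hxi hyi ha hb hab
  have hZconv : Convex ℝ Z := by
    rw [hZ, show (fun t => (∑ i, B i) + L t) '' cube
        = (fun z => (∑ i, B i) + z) '' (L '' cube) from (Set.image_image _ _ _).symm]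
    exact ((hcubeConv.linear_image L).translate _)
  have hcubeEq : cube = (MeasurableEquiv.toLp 2 (Fin d → ℝ)).symm ⁻¹'
      (Set.pi Set.univ fun _ => Set.Icc (0:ℝ) 1) := by
    ext t
    simp [Set.mem_pi, Pi.le_def, forall_and,
      hcubedef, Set.mem_Icc]
  have hcubeCompact : IsCompact cube := by
    have : cube = ⇑(EuclideanSpace.equiv (Fin d) ℝ) ⁻¹'
        (Set.pi Set.univ fun _ => Set.Icc (0:ℝ) 1) := hcubeEq
    rw [this]
    exact (EuclideanSpace.equiv (Fin d) ℝ).toHomeomorph.isCompact_preimage.mpr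
      (isCompact_univ_pi fun _ => isCompact_Icc)
  have hZcompact : IsCompact Z := by
    refine hcubeCompact.image ?_
    exact (continuous_const.add L.continuous_of_finiteDimensional)
  -- subgrad q 0 = Z
  have hsub0 : subgrad q 0 = Z := by
    refine Set.Subset.antisymm ?_ hZsub
    intro ξ hξ
    by_contra hξZ
    obtain ⟨f, u, hfu, huξ⟩ :=
      geometric_hahn_banach_closed_point hZconv hZcompact.isClosed hξZ
    obtain ⟨v, hv⟩ := (InnerProductSpace.toDual ℝ (EuclideanSpace ℝ (Fin d))).surjective f
    obtain ⟨z, hzZ, hzv⟩ := hsupport v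
    have h1 : ⟪v, z⟫_ℝ < u := by
      have := hfu z hzZ; rwa [← hv, InnerProductSpace.toDual_apply_apply] at this
    have h2 : u < ⟪v, ξ⟫_ℝ := by
      rwa [← hv, InnerProductSpace.toDual_apply_apply] at huξ
    have h3 : ⟪ξ, v⟫_ℝ ≤ q v := by
      rw [subgrad0] at hξ; exact hξ v
    rw [real_inner_comm] at h1 h2
    linarith [hzv ▸ h1]
  -- volume of Z
  have hcubeVol : volume cube = 1 := by
    rw [hcubeEq, (EuclideanSpace.volume_preserving_symm_measurableEquiv_toLp (Fin d)).measure_preimage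
      ((MeasurableSet.univ_pi fun _ => measurableSet_Icc).nullMeasurableSet), volume_pi_pi]
    simp [Real.volume_Icc]
  have hdet : LinearMap.det L = N.det := by
    rw [hL, Matrix.toEuclideanLin_eq_toLin, LinearMap.det_toLin]
  have hZvol : volume Z = ENNReal.ofReal |N.det| := by
    rw [hZ, show (fun t => (∑ i, B i) + L t) '' cube
        = (fun z => (∑ i, B i) + z) '' (L '' cube) from (Set.image_image _ _ _).symm,
      show (fun z => (∑ i, B i) + z) '' (L '' cube) = (∑ i, B i) +ᵥ (L '' cube) from rfl,
      measure_vadd, Measure.addHaar_image_linearMap, hdet, hcubeVol, mul_one]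
  by_cases h0E : (0 : EuclideanSpace ℝ (Fin d)) ∈ E
  · rw [if_pos h0E]
    have hU : (⋃ x ∈ E, subgrad q x) = subgrad q 0 := by
      apply Set.Subset.antisymm
      · intro ξ hξ
        simp only [Set.mem_iUnion] at hξ
        obtain ⟨x, _, hx⟩ := hξ
        rw [subgrad0]
        exact (keySub x ξ hx).1
      · intro ξ hξ
        simp only [Set.mem_iUnion]
        exact ⟨0, h0E, hξ⟩
    rw [hU, hsub0, hZvol]
  · rw [if_neg h0E]
    refine measure_mono_null ?_ ((hsub0 ▸ hZconv : Convex ℝ (subgrad q 0)).addHaar_frontier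
      volume)
    intro ξ hξ
    simp only [Set.mem_iUnion] at hξ
    obtain ⟨x, hxE, hx⟩ := hξ
    have hx0 : x ≠ 0 := fun h => h0E (h ▸ hxE)
    have hmem : ξ ∈ subgrad q 0 := by
      rw [subgrad0]; exact (keySub x ξ hx).1
    have hnotint : ξ ∉ interior (subgrad q 0) := by
      intro hint
      rw [mem_interior_iff_mem_nhds, Metric.mem_nhds_iff] at hint
      obtain ⟨ε, hε, hball⟩ := hint
      set c : ℝ := ε / (2 * ‖x‖) with hc
      have hxnorm : (0:ℝ) < ‖x‖ := norm_pos_iff.mpr hx0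
      have hcpos : 0 < c := div_pos hε (by positivity)
      have hmem2 : ξ + c • x ∈ subgrad q 0 := by
        apply hball
        rw [Metric.mem_ball, dist_eq_norm, add_sub_cancel_left, norm_smul,
          Real.norm_eq_abs, abs_of_pos hcpos, hc]
        have hxc : ε / (2 * ‖x‖) * ‖x‖ = ε / 2 := by
          field_simp
        rw [hxc]
        linarith
      rw [subgrad0] at hmem2
      have h1 := hmem2 x
      rw [inner_add_left, real_inner_smul_left, real_inner_self_eq_norm_sq] at h1
      have h2 : ⟪ξ, x⟫_ℝ = q x := (keySub x ξ hx).2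
      nlinarith [mul_pos hcpos (pow_pos hxnorm 2)]
    rw [frontier, Set.mem_diff]
    exact ⟨subset_closure hmem, hnotint⟩

end
end

section
/- Let f be a nonzero Laurent polynomial in the variables t, z_1, …, z_d with complex coefficients, identified with a finitely supported function on ℤ × ℤ^d with support supp(f). Then the slice of the trivial-valuation tropical hypersurface of f at u = −1 equals the t-adic tropical hypersurface of f: {x ∈ ℝ^d : (−1, x) ∈ Trop_0(f)} = Trop_ν(f). -/
noncomputable section

/-- Laurent polynomials in `t, z_1, …, z_d` over `ℂ`, as the monoid algebra on `ℤ × ℤ^d`. -/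
abbrev Laurent (d : ℕ) := AddMonoidAlgebra ℂ (ℤ × (Fin d → ℤ))

/-- The affine function `(u, x) ↦ j·u + ⟨α, x⟩` attached to a monomial exponent `(j, α)`. -/
def val0 {d : ℕ} (p : ℤ × (Fin d → ℤ)) (u : ℝ) (x : Fin d → ℝ) : ℝ :=
  (p.1 : ℝ) * u + ∑ i, (p.2 i : ℝ) * x i

/-- The tropical hypersurface of `f` for the trivial valuation: the set of `(u,x)` where
the maximum `max_{(j,α) ∈ supp f} (j·u + ⟨α,x⟩)` is attained by at least two distinct
elements of the support. -/
def Trop0 {d : ℕ} (f : Laurent d) : Set (ℝ × (Fin d → ℝ)) :=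
  {ux | ∃ p ∈ f.coeff.support, ∃ q ∈ f.coeff.support, p ≠ q ∧
      val0 p ux.1 ux.2 = val0 q ux.1 ux.2 ∧
      ∀ r ∈ f.coeff.support, val0 r ux.1 ux.2 ≤ val0 p ux.1 ux.2}

/-- The set `A(f)` of `z`-exponents of `f`. -/
def expSet {d : ℕ} (f : Laurent d) : Finset (Fin d → ℤ) :=
  f.coeff.support.image Prod.snd

/-- The `t`-adic valuation `ν(α) = min { j : (j, α) ∈ supp f }` of the coefficient of
`z^α` in `f`, viewed in `ℂ((t))`. -/
def nuVal {d : ℕ} (f : Laurent d) (a : Fin d → ℤ) : ℤ :=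
  sInf {j : ℤ | (j, a) ∈ f.coeff.support}

/-- The affine function `x ↦ −ν(α) + ⟨α, x⟩` attached to a `z`-exponent `α` of `f`. -/
def valNu {d : ℕ} (f : Laurent d) (a : Fin d → ℤ) (x : Fin d → ℝ) : ℝ :=
  -(nuVal f a : ℝ) + ∑ i, (a i : ℝ) * x i

/-- The tropical hypersurface of `f` for the `t`-adic valuation: the set of `x` where the
maximum `max_{α ∈ A(f)} (−ν(α) + ⟨α,x⟩)` is attained by at least two distinct exponents. -/
def TropNu {d : ℕ} (f : Laurent d) : Set (Fin d → ℝ) :=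
  {x | ∃ a ∈ expSet f, ∃ b ∈ expSet f, a ≠ b ∧
      valNu f a x = valNu f b x ∧ ∀ r ∈ expSet f, valNu f r x ≤ valNu f a x}

/-- For a nonzero Laurent polynomial `f` in `t, z_1, …, z_d`, the slice at `u = −1` of the
trivial-valuation tropical hypersurface of `f` equals the `t`-adic tropical hypersurface. -/
theorem trop0_slice_eq_tropNu (d : ℕ) (f : Laurent d) (hf : f ≠ 0) :
    {x : Fin d → ℝ | ((-1 : ℝ), x) ∈ Trop0 f} = TropNu f := by
  have key : ∀ a ∈ expSet f, (nuVal f a, a) ∈ f.coeff.support ∧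
      ∀ j : ℤ, (j, a) ∈ f.coeff.support → nuVal f a ≤ j := by
    intro a ha
    set S : Set ℤ := {j : ℤ | (j, a) ∈ f.coeff.support} with hS
    have hne : S.Nonempty := by
      obtain ⟨p, hp, hpa⟩ := Finset.mem_image.mp ha
      exact ⟨p.1, show (p.1, a) ∈ f.coeff.support by rw [← hpa]; exact hp⟩
    have hbdd : BddBelow S := by
      have hfin : S.Finite := by
        apply Set.Finite.subset (Finset.finite_toSet (f.coeff.support.image Prod.fst))
        intro j hj
        exact Finset.mem_coe.mpr (Finset.mem_image.mpr ⟨(j, a), hj, rfl⟩)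
      exact hfin.bddBelow
    refine ⟨Int.csInf_mem hne hbdd, fun j hj => csInf_le hbdd hj⟩
  have hval : ∀ (j : ℤ) (a : Fin d → ℤ) (x : Fin d → ℝ),
      val0 (j, a) (-1) x = -(j : ℝ) + ∑ i, (a i : ℝ) * x i := by
    intro j a x; simp only [val0]; ring
  ext x
  simp only [Set.mem_setOf_eq, Trop0, TropNu]
  constructor
  · rintro ⟨p, hp, q, hq, hpq, heq, hmax⟩
    have hab : p.2 ≠ q.2 := by
      intro h
      apply hpq
      have : (p.1 : ℝ) = q.1 := by
        have e1 := hval p.1 p.2 x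
        have e2 := hval q.1 q.2 x
        rw [show p = (p.1, p.2) from rfl] at heq
        rw [show q = (q.1, q.2) from rfl] at heq
        rw [e1, e2, h] at heq
        linarith
      have : p.1 = q.1 := by exact_mod_cast this
      exact Prod.ext this h
    have hpa : p.2 ∈ expSet f := Finset.mem_image.mpr ⟨p, hp, rfl⟩
    have hqa : q.2 ∈ expSet f := Finset.mem_image.mpr ⟨q, hq, rfl⟩
    -- valNu f a x = max for a = p.2 and q.2
    have hvnu : ∀ r ∈ f.coeff.support, valNu f r.2 x = val0 r (-1) x →
        valNu f r.2 x = valNu f r.2 x := fun _ _ _ => rfl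
    have hle : ∀ a ∈ expSet f, valNu f a x ≤ val0 p (-1) x := by
      intro a ha
      have hm := (key a ha).1
      have := hmax (nuVal f a, a) hm
      rw [hval] at this
      simpa [valNu] using this
    have hpe : valNu f p.2 x = val0 p (-1) x := by
      refine le_antisymm (hle p.2 hpa) ?_
      have hnu := (key p.2 hpa).2 p.1 (by rw [show (p.1, p.2) = p from rfl]; exact hp)
      rw [show p = (p.1, p.2) from rfl, hval]
      have : -(p.1 : ℝ) ≤ -(nuVal f p.2 : ℝ) := by
        simp only [neg_le_neg_iff]; exact_mod_cast hnu
      unfold valNu; linarith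
    have hqe : valNu f q.2 x = val0 q (-1) x := by
      refine le_antisymm (heq ▸ hle q.2 hqa) ?_
      have hnu := (key q.2 hqa).2 q.1 (by rw [show (q.1, q.2) = q from rfl]; exact hq)
      rw [show q = (q.1, q.2) from rfl, hval]
      have : -(q.1 : ℝ) ≤ -(nuVal f q.2 : ℝ) := by
        simp only [neg_le_neg_iff]; exact_mod_cast hnu
      unfold valNu; linarith
    exact ⟨p.2, hpa, q.2, hqa, hab, by rw [hpe, hqe, heq],
      fun r hr => by rw [hpe]; exact hle r hr⟩
  · rintro ⟨a, ha, b, hb, hab, heq, hmax⟩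
    refine ⟨(nuVal f a, a), (key a ha).1, (nuVal f b, b), (key b hb).1,
      fun h => hab (congrArg Prod.snd h), ?_, ?_⟩
    · rw [hval, hval]
      simpa [valNu] using heq
    · intro r hr
      have hra : r.2 ∈ expSet f := Finset.mem_image.mpr ⟨r, hr, rfl⟩
      have hnu := (key r.2 hra).2 r.1 (by rw [show (r.1, r.2) = r from rfl]; exact hr)
      have h1 : val0 r (-1) x ≤ valNu f r.2 x := by
        rw [show r = (r.1, r.2) from rfl, hval]
        have : -(r.1 : ℝ) ≤ -(nuVal f r.2 : ℝ) := by
          simp only [neg_le_neg_iff]; exact_mod_cast hnu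
        unfold valNu; linarith
      calc val0 r (-1) x ≤ valNu f r.2 x := h1
        _ ≤ valNu f a x := hmax r.2 hra
        _ = val0 (nuVal f a, a) (-1) x := by rw [hval]; simp [valNu]

end
end

section
/- Let I be an ideal of the Laurent polynomial ring ℂ[t^{±1}, z_1^{±1}, …, z_d^{±1}], identified with the monoid algebra AddMonoidAlgebra ℂ (ℤ × (Fin d → ℤ)). Then the tropicalisation of I with respect to the trivial valuation, intersected with the hyperplane {u = −1}, coincides with the tropicalisation of I with respect to the t-adic valuation: {x ∈ ℝ^d : (−1, x) ∈ ⋂_{f ∈ I, f ≠ 0} Trop_0(f)} = ⋂_{f ∈ I, f ≠ 0} Trop_ν(f). -/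
noncomputable section

namespace TropAux

variable {d : ℕ} (f : Laurent d)

lemma supSet_nonempty {a : Fin d → ℤ} (ha : a ∈ expSet f) :
    {j : ℤ | (j, a) ∈ f.coeff.support}.Nonempty := by
  obtain ⟨p, hp, hpa⟩ := Finset.mem_image.mp ha
  exact ⟨p.1, by simpa [Set.mem_setOf_eq, ← hpa] using hp⟩

lemma supSet_bddBelow (a : Fin d → ℤ) :
    BddBelow {j : ℤ | (j, a) ∈ f.coeff.support} := by
  refine (Set.Finite.subset (f.coeff.support.image Prod.fst).finite_toSet ?_).bddBelow
  intro j hj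
  exact Finset.mem_coe.mpr (Finset.mem_image.mpr ⟨(j, a), hj, rfl⟩)

lemma nuVal_mem {a : Fin d → ℤ} (ha : a ∈ expSet f) :
    (nuVal f a, a) ∈ f.coeff.support :=
  Int.csInf_mem (supSet_nonempty f ha) (supSet_bddBelow f a)

lemma nuVal_le {a : Fin d → ℤ} {j : ℤ} (hj : (j, a) ∈ f.coeff.support) :
    nuVal f a ≤ j :=
  csInf_le (supSet_bddBelow f a) hj

lemma val0_neg_one (p : ℤ × (Fin d → ℤ)) (x : Fin d → ℝ) :
    val0 p (-1) x = -(p.1 : ℝ) + ∑ i, (p.2 i : ℝ) * x i := by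
  simp [val0]

lemma val0_nuVal (a : Fin d → ℤ) (x : Fin d → ℝ) :
    val0 (nuVal f a, a) (-1) x = valNu f a x := by
  simp [val0, valNu]

lemma val0_le_valNu {r : ℤ × (Fin d → ℤ)} (hr : r ∈ f.coeff.support) (x : Fin d → ℝ) :
    val0 r (-1) x ≤ valNu f r.2 x := by
  rw [val0_neg_one, valNu]
  have : (nuVal f r.2 : ℝ) ≤ (r.1 : ℝ) := by
    exact_mod_cast nuVal_le f (by simpa using hr)
  linarith

lemma snd_mem_expSet {r : ℤ × (Fin d → ℤ)} (hr : r ∈ f.coeff.support) :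
    r.2 ∈ expSet f :=
  Finset.mem_image.mpr ⟨r, hr, rfl⟩

lemma key (x : Fin d → ℝ) : ((-1 : ℝ), x) ∈ Trop0 f ↔ x ∈ TropNu f := by
  constructor
  · rintro ⟨p, hp, q, hq, hpq, heq, hmax⟩
    refine ⟨p.2, snd_mem_expSet f hp, q.2, snd_mem_expSet f hq, ?_, ?_, ?_⟩
    · intro h
      apply hpq
      have : -(p.1 : ℝ) = -(q.1 : ℝ) := by
        have := heq
        rw [val0_neg_one, val0_neg_one, h] at this
        linarith
      have hfst : p.1 = q.1 := by exact_mod_cast neg_injective this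
      exact Prod.ext hfst h
    · have h1 : valNu f p.2 x = val0 p (-1) x :=
        le_antisymm (by rw [← val0_nuVal]; exact hmax _ (nuVal_mem f (snd_mem_expSet f hp)))
          (val0_le_valNu f hp x)
      have h2 : valNu f q.2 x = val0 q (-1) x :=
        le_antisymm (by rw [← val0_nuVal]
                        exact le_of_le_of_eq (hmax _ (nuVal_mem f (snd_mem_expSet f hq))) heq)
          (val0_le_valNu f hq x)
      rw [h1, h2, heq]
    · intro r hr
      have h1 : valNu f p.2 x = val0 p (-1) x :=
        le_antisymm (by rw [← val0_nuVal]; exact hmax _ (nuVal_mem f (snd_mem_expSet f hp)))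
          (val0_le_valNu f hp x)
      rw [h1, ← val0_nuVal]
      exact hmax _ (nuVal_mem f hr)
  · rintro ⟨a, ha, b, hb, hab, heq, hmax⟩
    refine ⟨(nuVal f a, a), nuVal_mem f ha, (nuVal f b, b), nuVal_mem f hb,
      fun h => hab (congrArg Prod.snd h), ?_, ?_⟩
    · rw [val0_nuVal, val0_nuVal, heq]
    · intro r hr
      rw [val0_nuVal]
      exact le_trans (val0_le_valNu f hr x) (hmax _ (snd_mem_expSet f hr))

end TropAux

/-- For an ideal `I` of `ℂ[t^{±1}, z^{±1}]`, the trivial-valuation tropical variety of `I`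
sliced at `u = −1` coincides with the `t`-adic tropical variety of `I`. -/
theorem trop0_slice_eq_tropNu_ideal (d : ℕ) (I : Ideal (Laurent d)) :
    {x : Fin d → ℝ | ((-1 : ℝ), x) ∈ ⋂ f ∈ {g : Laurent d | g ∈ I ∧ g ≠ 0}, Trop0 f}
      = ⋂ f ∈ {g : Laurent d | g ∈ I ∧ g ≠ 0}, TropNu f := by
  ext x
  simp only [Set.mem_setOf_eq, Set.mem_iInter]
  constructor
  · intro h f hf
    exact (TropAux.key f x).mp (h f hf)
  · intro h f hf
    exact (TropAux.key f x).mpr (h f hf)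

end
end

section
/- Let V_1, V_2 ⊆ ℝ^d be linear subspaces spanned by rational vectors, of dimensions p and d − p respectively, with V_1 ∩ V_2 = {0}. Then the intersection T_{V_1} ∩ T_{V_2} of the associated subtori of (ℂˣ)^d is a finite set whose cardinality equals the index [ℤ^d : (V_1 ∩ ℤ^d) + (V_2 ∩ ℤ^d)], i.e. the cardinality of the quotient group ℤ^d / ((V_1 ∩ ℤ^d) + (V_2 ∩ ℤ^d)). -/
noncomputable section

/-- The subtorus of `(ℂˣ)^d` associated to a linear subspace `V ⊆ ℝ^d`:
`T_V = {z : ∏ i z_i^{m_i} = 1 for every m ∈ ℤ^d orthogonal to V}`. -/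
def torus (d : ℕ) (V : Submodule ℝ (Fin d → ℝ)) : Set (Fin d → ℂˣ) :=
  {z | ∀ m : Fin d → ℤ, (∀ v ∈ V, ∑ i, (m i : ℝ) * v i = 0) → ∏ i, z i ^ m i = 1}

/-- The lattice `V ∩ ℤ^d` of integer points of a linear subspace `V ⊆ ℝ^d`, as a subgroup
of `ℤ^d`. -/
def intLattice (d : ℕ) (V : Submodule ℝ (Fin d → ℝ)) : AddSubgroup (Fin d → ℤ) where
  carrier := {m | (fun i => (m i : ℝ)) ∈ V}
  zero_mem' := by
    show (fun i => (((0 : Fin d → ℤ) i : ℤ) : ℝ)) ∈ V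
    have h : (fun i => (((0 : Fin d → ℤ) i : ℤ) : ℝ)) = (0 : Fin d → ℝ) := by
      funext i; simp
    rw [h]; exact V.zero_mem
  add_mem' := by
    intro a b ha hb
    show (fun i => (((a + b) i : ℤ) : ℝ)) ∈ V
    have h : (fun i => (((a + b) i : ℤ) : ℝ))
        = (fun i => ((a i : ℤ) : ℝ)) + fun i => ((b i : ℤ) : ℝ) := by
      funext i; simp
    rw [h]; exact V.add_mem ha hb
  neg_mem' := by
    intro a ha
    show (fun i => (((-a) i : ℤ) : ℝ)) ∈ V
    have h : (fun i => (((-a) i : ℤ) : ℝ)) = -fun i => ((a i : ℤ) : ℝ) := by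
      funext i; simp
    rw [h]; exact V.neg_mem ha

namespace TorusAux
open Complex Submodule Module

variable {d : ℕ}


def rc (v : Fin d → ℝ) : Fin d → ℂ := fun i => (v i : ℂ)
def zr (m : Fin d → ℤ) : Fin d → ℝ := fun i => (m i : ℝ)
def zc (m : Fin d → ℤ) : Fin d → ℂ := fun i => (m i : ℂ)
def qr (q : Fin d → ℚ) : Fin d → ℝ := fun i => (q i : ℝ)
def qc (q : Fin d → ℚ) : Fin d → ℂ := fun i => (q i : ℂ)

lemma exists_int_smul (q : Fin d → ℚ) :
    ∃ n : ℕ, 0 < n ∧ ∃ m : Fin d → ℤ, ∀ i, ((m i : ℚ)) = (n : ℚ) * q i := by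
  classical
  refine ⟨∏ i, (q i).den, Finset.prod_pos (fun i _ => (q i).pos), ?_⟩
  have hdvd : ∀ i : Fin d, ∃ c : ℕ, (∏ j, (q j).den) = (q i).den * c := by
    intro i
    exact (Finset.dvd_prod_of_mem (fun j => (q j).den) (Finset.mem_univ i))
  choose c hc using hdvd
  refine ⟨fun i => (q i).num * (c i), ?_⟩
  intro i
  have hnum : ((q i).num : ℚ) = q i * ((q i).den : ℚ) := (Rat.mul_den_eq_num (q i)).symm
  have h1 : ((∏ j, (q j).den : ℕ) : ℚ) = ((q i).den : ℚ) * (c i : ℚ) := by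
    exact_mod_cast congrArg (Nat.cast : ℕ → ℚ) (hc i)
  rw [h1]
  push_cast
  rw [hnum]
  ring


def MZ (V : Submodule ℝ (Fin d → ℝ)) : Submodule ℤ (Fin d → ℤ) where
  carrier := {m | ∀ v ∈ V, ∑ i, (m i : ℝ) * v i = 0}
  add_mem' := by
    intro a b ha hb v hv
    have : ∀ i, (((a + b) i : ℤ) : ℝ) * v i = (a i : ℝ) * v i + (b i : ℝ) * v i := by
      intro i; push_cast [Pi.add_apply]; ring
    simp only [this, Finset.sum_add_distrib, ha v hv, hb v hv, add_zero]
  zero_mem' := by intro v hv; simp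
  smul_mem' := by
    intro c a ha v hv
    have : ∀ i, (((c • a) i : ℤ) : ℝ) * v i = (c : ℝ) * ((a i : ℝ) * v i) := by
      intro i; push_cast [Pi.smul_apply, smul_eq_mul]; ring
    simp only [this, ← Finset.mul_sum, ha v hv, mul_zero]

def VC (V : Submodule ℝ (Fin d → ℝ)) : Submodule ℂ (Fin d → ℂ) :=
  span ℂ (rc '' (V : Set (Fin d → ℝ)))

lemma rc_mem_VC {V : Submodule ℝ (Fin d → ℝ)} {v : Fin d → ℝ} (hv : v ∈ V) :
    rc v ∈ VC V := subset_span ⟨v, hv, rfl⟩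

lemma span_intLattice {V : Submodule ℝ (Fin d → ℝ)} {s : Set (Fin d → ℚ)}
    (hrat : V = Submodule.span ℝ (qr '' s)) :
    V ≤ Submodule.span ℝ (zr '' {m : Fin d → ℤ | zr m ∈ V}) := by
  conv_lhs => rw [hrat]
  rw [span_le]
  rintro - ⟨q, hq, rfl⟩
  obtain ⟨n, hn, m, hm⟩ := exists_int_smul q
  have hqV : qr q ∈ V := by
    rw [hrat]; exact subset_span ⟨q, hq, rfl⟩
  have hzm : zr m = (n : ℝ) • qr q := by
    funext i
    have := hm i
    simp only [zr, qr, Pi.smul_apply, smul_eq_mul]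
    exact_mod_cast congrArg (Rat.cast : ℚ → ℝ) this
  have hmem : zr m ∈ V := by
    rw [hzm]; exact V.smul_mem _ hqV
  have : qr q = ((n : ℝ))⁻¹ • zr m := by
    rw [hzm, smul_smul, inv_mul_cancel₀ (by exact_mod_cast hn.ne'), one_smul]
  rw [this]
  exact Submodule.smul_mem _ _ (subset_span ⟨m, hmem, rfl⟩)

lemma rc_add (v w : Fin d → ℝ) : rc (v + w) = rc v + rc w := by
  funext i; simp [rc]

lemma rc_smul (r : ℝ) (v : Fin d → ℝ) : rc (r • v) = (r : ℂ) • rc v := by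
  funext i; simp [rc]

lemma finrank_VC_le (V : Submodule ℝ (Fin d → ℝ)) :
    finrank ℂ (VC V) ≤ finrank ℝ V := by
  classical
  set n := finrank ℝ V with hn
  let b : Basis (Fin n) ℝ V := finBasis ℝ V
  let f : Fin n → (Fin d → ℂ) := fun j => rc (b j : Fin d → ℝ)
  have hle : VC V ≤ span ℂ (Set.range f) := by
    rw [VC, span_le]
    rintro - ⟨v, hv, rfl⟩
    have hv' : ((⟨v, hv⟩ : V) : Fin d → ℝ) = ∑ j, b.repr ⟨v, hv⟩ j • (b j : Fin d → ℝ) := by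
      conv_lhs => rw [← b.sum_repr ⟨v, hv⟩]
      push_cast
      rfl
    have : rc v = ∑ j, ((b.repr ⟨v, hv⟩ j : ℂ)) • f j := by
      funext i
      have := congrFun hv' i
      simp only [Finset.sum_apply, Pi.smul_apply, smul_eq_mul] at this ⊢
      simp only [rc, f, this]
      push_cast
      rfl
    rw [this]
    exact Submodule.sum_mem _ fun j _ =>
      Submodule.smul_mem _ _ (subset_span (Set.mem_range_self j))
  calc finrank ℂ (VC V) ≤ finrank ℂ (span ℂ (Set.range f)) := Submodule.finrank_mono hle
    _ ≤ Fintype.card (Fin n) := finrank_range_le_card f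
    _ = n := Fintype.card_fin n

lemma VC_sup {V₁ V₂ : Submodule ℝ (Fin d → ℝ)} (h : V₁ ⊔ V₂ = ⊤) :
    VC V₁ ⊔ VC V₂ = ⊤ := by
  classical
  rw [eq_top_iff]
  intro x _
  rw [pi_eq_sum_univ x]
  refine Submodule.sum_mem _ fun i _ => Submodule.smul_mem _ _ ?_
  have he : (fun j => if i = j then (1:ℝ) else 0) ∈ V₁ ⊔ V₂ := by rw [h]; trivial
  obtain ⟨v₁, hv₁, v₂, hv₂, hsum⟩ := Submodule.mem_sup.mp he
  have : (fun j => if i = j then (1:ℂ) else 0) = rc v₁ + rc v₂ := by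
    rw [← rc_add, hsum]
    funext j
    simp only [rc]
    split_ifs <;> simp
  rw [this]
  exact Submodule.add_mem _ (Submodule.mem_sup_left (rc_mem_VC hv₁))
    (Submodule.mem_sup_right (rc_mem_VC hv₂))

lemma VC_inf {p : ℕ} {V₁ V₂ : Submodule ℝ (Fin d → ℝ)}
    (hdim₁ : finrank ℝ V₁ = p) (hdim₂ : finrank ℝ V₂ = d - p)
    (hsup : V₁ ⊔ V₂ = ⊤) : VC V₁ ⊓ VC V₂ = ⊥ := by
  have hp : p ≤ d := by
    rw [← hdim₁]
    have := Submodule.finrank_le V₁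
    rwa [Module.finrank_fin_fun] at this
  have h1 := Submodule.finrank_sup_add_finrank_inf_eq (VC V₁) (VC V₂)
  rw [VC_sup hsup, finrank_top, Module.finrank_fin_fun] at h1
  have h2 : finrank ℂ (VC V₁) ≤ p := hdim₁ ▸ finrank_VC_le V₁
  have h3 : finrank ℂ (VC V₂) ≤ d - p := hdim₂ ▸ finrank_VC_le V₂
  have : finrank ℂ ↥(VC V₁ ⊓ VC V₂) = 0 := by omega
  exact Submodule.finrank_eq_zero.mp this


def bC (d : ℕ) : (Fin d → ℂ) →ₗ[ℂ] (Fin d → ℂ) →ₗ[ℂ] ℂ :=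
  LinearMap.mk₂ ℂ (fun a c => ∑ i, a i * c i)
    (by intros m₁ m₂ n; simp [add_mul, Finset.sum_add_distrib])
    (by intros r m n; simp [Finset.mul_sum, mul_assoc])
    (by intros m n₁ n₂; simp [mul_add, Finset.sum_add_distrib])
    (by intros r m n; simp [Finset.mul_sum]; ring_nf;
        exact Finset.sum_congr rfl fun i _ => by ring)

def dotQ (d : ℕ) : LinearMap.BilinForm ℚ (Fin d → ℚ) :=
  LinearMap.mk₂ ℚ (fun a c => ∑ i, a i * c i)
    (by intros m₁ m₂ n; simp [add_mul, Finset.sum_add_distrib])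
    (by intros r m n; simp [Finset.mul_sum, mul_assoc])
    (by intros m n₁ n₂; simp [mul_add, Finset.sum_add_distrib])
    (by intros r m n; simp [Finset.mul_sum]; ring_nf;
        exact Finset.sum_congr rfl fun i _ => by ring)

lemma dotQ_apply (a c : Fin d → ℚ) : dotQ d a c = ∑ i, a i * c i := rfl
lemma bC_apply (a c : Fin d → ℂ) : bC d a c = ∑ i, a i * c i := rfl

lemma gram_det_ne_zero (U : Submodule ℚ (Fin d → ℚ)) :
    (Matrix.of fun a b => dotQ d (finBasis ℚ U a : Fin d → ℚ) (finBasis ℚ U b : Fin d → ℚ)).det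
      ≠ 0 := by
  classical
  set k := finrank ℚ U
  set bu := finBasis ℚ U with hbu
  set G := Matrix.of fun a b => dotQ d (bu a : Fin d → ℚ) (bu b : Fin d → ℚ) with hG
  intro hdet
  obtain ⟨v, hv, hGv⟩ := (Matrix.exists_mulVec_eq_zero_iff).mpr hdet
  set q : U := ∑ a, v a • bu a with hq
  have hqcoe : (q : Fin d → ℚ) = ∑ a, v a • (bu a : Fin d → ℚ) := by
    rw [hq]
    push_cast
    rfl
  have hexp : ∀ (X : Fin d → ℚ), dotQ d X (∑ b, v b • (bu b : Fin d → ℚ))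
      = ∑ b, v b * dotQ d X (bu b : Fin d → ℚ) := by
    intro X
    rw [map_sum]
    exact Finset.sum_congr rfl fun b _ => by rw [map_smul, smul_eq_mul]
  have hexp1 : ∀ (Y : Fin d → ℚ), dotQ d (∑ a, v a • (bu a : Fin d → ℚ)) Y
      = ∑ a, v a * dotQ d (bu a : Fin d → ℚ) Y := by
    intro Y
    rw [map_sum, LinearMap.sum_apply]
    exact Finset.sum_congr rfl fun a _ => by rw [map_smul, LinearMap.smul_apply, smul_eq_mul]
  have hdot : dotQ d (q : Fin d → ℚ) (q : Fin d → ℚ) = 0 := by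
    rw [hqcoe, hexp1]
    have hterm : ∀ a, v a * dotQ d (bu a : Fin d → ℚ) (∑ b, v b • (bu b : Fin d → ℚ))
        = v a * (G.mulVec v) a := by
      intro a
      rw [hexp]
      congr 1
      simp only [Matrix.mulVec, dotProduct, hG, Matrix.of_apply]
      exact Finset.sum_congr rfl fun b _ => mul_comm _ _
    rw [Finset.sum_congr rfl fun a _ => hterm a]
    simp [hGv]
  have hq0 : (q : Fin d → ℚ) = 0 := by
    funext i
    rw [dotQ_apply] at hdot
    have h' : ∀ j ∈ Finset.univ, (0:ℚ) ≤ (q : Fin d → ℚ) j * (q : Fin d → ℚ) j :=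
      fun j _ => mul_self_nonneg _
    exact mul_self_eq_zero.mp ((Finset.sum_eq_zero_iff_of_nonneg h').mp hdot i (Finset.mem_univ i))
  have hqz : q = 0 := Subtype.ext hq0
  have hv0 : v = 0 := by
    have h2 := Fintype.linearIndependent_iff.mp bu.linearIndependent v (by rw [← hq, hqz])
    funext a; exact h2 a
  exact hv hv0

lemma dotQ_refl : (dotQ d).IsRefl := by
  intro x y h
  rw [dotQ_apply] at h ⊢
  rw [← h]
  exact Finset.sum_congr rfl fun i _ => mul_comm _ _

lemma dotQ_self_eq_zero {x : Fin d → ℚ} (h : dotQ d x x = 0) : x = 0 := by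
  rw [dotQ_apply] at h
  funext i
  have h' : ∀ j ∈ Finset.univ, (0:ℚ) ≤ x j * x j := fun j _ => mul_self_nonneg _
  have := (Finset.sum_eq_zero_iff_of_nonneg h').mp h i (Finset.mem_univ i)
  exact mul_self_eq_zero.mp this

lemma W_sup_orth (W : Submodule ℚ (Fin d → ℚ)) : W ⊔ (dotQ d).orthogonal W = ⊤ := by
  have hdisj : Disjoint W ((dotQ d).orthogonal W) := by
    rw [disjoint_def]
    intro x hxW hxU
    exact dotQ_self_eq_zero (hxU x hxW)
  have := (LinearMap.BilinForm.isCompl_orthogonal_iff_disjoint (B := dotQ d)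
    (W := W) dotQ_refl).mpr hdisj
  exact codisjoint_iff.mp this.codisjoint


def qrL (d : ℕ) : (Fin d → ℚ) →ₗ[ℚ] (Fin d → ℝ) where
  toFun := qr
  map_add' := by intros a b; funext i; simp [qr]
  map_smul' := by
    intros c a; funext i
    simp only [qr, Pi.smul_apply, smul_eq_mul, RingHom.id_apply, Rat.smul_def]
    push_cast
    ring

def lR (a : Fin d → ℝ) : (Fin d → ℝ) →ₗ[ℝ] ℝ where
  toFun := fun v => ∑ i, a i * v i
  map_add' := by intros v w; simp [mul_add, Finset.sum_add_distrib]
  map_smul' := by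
    intros c v
    simp only [Pi.smul_apply, smul_eq_mul, RingHom.id_apply, Finset.mul_sum]
    exact Finset.sum_congr rfl fun i _ => by ring

lemma qc_add (a b : Fin d → ℚ) : qc (a + b) = qc a + qc b := by
  funext i; simp [qc]

lemma span_qc_le_basis (U : Submodule ℚ (Fin d → ℚ)) {k : ℕ} (bu : Basis (Fin k) ℚ U) :
    span ℂ (qc '' (U : Set (Fin d → ℚ)))
      ≤ span ℂ (Set.range fun a => qc (bu a : Fin d → ℚ)) := by
  rw [span_le]
  rintro - ⟨u, hu, rfl⟩
  have hu' : ((⟨u, hu⟩ : U) : Fin d → ℚ) = ∑ j, bu.repr ⟨u, hu⟩ j • (bu j : Fin d → ℚ) := by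
    conv_lhs => rw [← bu.sum_repr ⟨u, hu⟩]
    push_cast
    rfl
  have hqc : qc u = ∑ j, ((bu.repr ⟨u, hu⟩ j : ℂ)) • qc (bu j : Fin d → ℚ) := by
    funext i
    have h1 := congrFun hu' i
    simp only [Finset.sum_apply, Pi.smul_apply, smul_eq_mul] at h1 ⊢
    simp only [qc, h1]
    push_cast
    rfl
  rw [hqc]
  exact Submodule.sum_mem _ fun j _ =>
    Submodule.smul_mem _ _ (subset_span (Set.mem_range_self j))

lemma span_qc_sup {W U : Submodule ℚ (Fin d → ℚ)} (h : W ⊔ U = ⊤) :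
    span ℂ (qc '' (W : Set (Fin d → ℚ))) ⊔ span ℂ (qc '' (U : Set (Fin d → ℚ))) = ⊤ := by
  classical
  rw [eq_top_iff]
  intro x _
  rw [pi_eq_sum_univ x]
  refine Submodule.sum_mem _ fun i _ => Submodule.smul_mem _ _ ?_
  have he : (fun j => if i = j then (1:ℚ) else 0) ∈ W ⊔ U := by rw [h]; trivial
  obtain ⟨v₁, hv₁, v₂, hv₂, hsum⟩ := Submodule.mem_sup.mp he
  have heq : (fun j => if i = j then (1:ℂ) else 0) = qc v₁ + qc v₂ := by
    rw [← qc_add, hsum]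
    funext j
    simp only [qc]
    split_ifs <;> simp
  rw [heq]
  exact Submodule.add_mem _ (Submodule.mem_sup_left (subset_span ⟨v₁, hv₁, rfl⟩))
    (Submodule.mem_sup_right (subset_span ⟨v₂, hv₂, rfl⟩))

lemma mem_VC_of_orth {V : Submodule ℝ (Fin d → ℝ)} {s : Set (Fin d → ℚ)}
    (hrat : V = Submodule.span ℝ (qr '' s)) (x : Fin d → ℂ)
    (hx : ∀ m ∈ MZ V, ∑ i, (m i : ℂ) * x i = 0) : x ∈ VC V := by
  classical
  set W := Submodule.span ℚ s with hW
  set U := (dotQ d).orthogonal W with hU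
  have hsW : s ⊆ (W : Set (Fin d → ℚ)) := Submodule.subset_span
  have hqrW : ∀ w ∈ W, qr w ∈ V := by
    intro w hw
    have hle : W ≤ Submodule.comap (qrL d) (V.restrictScalars ℚ) := by
      rw [hW, span_le]
      intro q hq
      simp only [SetLike.mem_coe, Submodule.mem_comap, Submodule.restrictScalars_mem]
      show qr q ∈ V
      rw [hrat]
      exact subset_span ⟨q, hq, rfl⟩
    exact hle hw
  have hUV : ∀ u ∈ U, ∀ v ∈ V, ∑ i, (u i : ℝ) * v i = 0 := by
    intro u hu v hv
    have hle : V ≤ LinearMap.ker (lR (qr u)) := by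
      rw [hrat, span_le]
      rintro - ⟨q, hq, rfl⟩
      simp only [SetLike.mem_coe, LinearMap.mem_ker]
      show ∑ i, qr u i * qr q i = 0
      have hqu : (∑ i, u i * q i : ℚ) = 0 := by
        have h1 : dotQ d q u = 0 := hu q (hsW hq)
        rw [dotQ_apply] at h1
        rw [← h1]
        exact Finset.sum_congr rfl fun i _ => mul_comm _ _
      calc ∑ i, qr u i * qr q i = ((∑ i, u i * q i : ℚ) : ℝ) := by
            simp only [qr]; push_cast; rfl
        _ = 0 := by rw [hqu]; exact Rat.cast_zero
    exact LinearMap.mem_ker.mp (hle hv)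
  have hUx : ∀ u ∈ U, ∑ i, (u i : ℂ) * x i = 0 := by
    intro u hu
    obtain ⟨n, hn, m, hm⟩ := exists_int_smul u
    have hmMZ : m ∈ MZ V := by
      show ∀ v ∈ V, ∑ i, (m i : ℝ) * v i = 0
      intro v hv
      have hterm : ∀ i, (m i : ℝ) * v i = (n : ℝ) * ((u i : ℝ) * v i) := by
        intro i
        have h1 : ((m i : ℚ) : ℝ) = (n : ℝ) * ((u i : ℚ) : ℝ) := by
          exact_mod_cast congrArg (Rat.cast : ℚ → ℝ) (hm i)
        push_cast at h1 ⊢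
        rw [h1]; ring
      rw [Finset.sum_congr rfl fun i _ => hterm i, ← Finset.mul_sum, hUV u hu v hv, mul_zero]
    have hxm := hx m hmMZ
    have hrw : ∀ i, (m i : ℂ) * x i = (n : ℂ) * ((u i : ℂ) * x i) := by
      intro i
      have h1 : ((m i : ℚ) : ℂ) = (n : ℂ) * ((u i : ℚ) : ℂ) := by
        exact_mod_cast congrArg (Rat.cast : ℚ → ℂ) (hm i)
      push_cast at h1 ⊢
      rw [h1]; ring
    rw [Finset.sum_congr rfl fun i _ => hrw i, ← Finset.mul_sum] at hxm
    have hn' : (n : ℂ) ≠ 0 := by exact_mod_cast hn.ne'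
    exact (mul_eq_zero.mp hxm).resolve_left hn'
  set WC := span ℂ (qc '' (W : Set (Fin d → ℚ))) with hWC
  set UC := span ℂ (qc '' (U : Set (Fin d → ℚ))) with hUC
  have hWCVC : WC ≤ VC V := by
    rw [hWC, span_le]
    rintro - ⟨w, hw, rfl⟩
    have hqcw : qc w = rc (qr w) := by funext i; simp [qc, rc, qr]
    rw [hqcw]
    exact rc_mem_VC (hqrW w hw)
  have hsupC : WC ⊔ UC = ⊤ := span_qc_sup (W_sup_orth W)
  have hx_top : x ∈ WC ⊔ UC := by rw [hsupC]; trivial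
  obtain ⟨y, hy, u, hu, hyu⟩ := Submodule.mem_sup.mp hx_top
  have hUCx : UC ≤ LinearMap.ker ((bC d).flip x) := by
    rw [hUC, span_le]
    rintro - ⟨u', hu', rfl⟩
    simp only [SetLike.mem_coe, LinearMap.mem_ker, LinearMap.flip_apply]
    exact hUx u' hu'
  have hgen : ∀ u' ∈ U, WC ≤ LinearMap.ker (bC d (qc u')) := by
    intro u' hu'
    rw [hWC, span_le]
    rintro - ⟨w, hw, rfl⟩
    simp only [SetLike.mem_coe, LinearMap.mem_ker]
    show ∑ i, qc u' i * qc w i = 0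
    have h0 : (∑ i, u' i * w i : ℚ) = 0 := by
      have h1 : dotQ d w u' = 0 := hu' w hw
      rw [dotQ_apply] at h1
      rw [← h1]
      exact Finset.sum_congr rfl fun i _ => mul_comm _ _
    calc ∑ i, qc u' i * qc w i = ((∑ i, u' i * w i : ℚ) : ℂ) := by
          simp only [qc]; push_cast; rfl
      _ = 0 := by rw [h0]; exact Rat.cast_zero
  have hUCy : UC ≤ LinearMap.ker ((bC d).flip y) := by
    rw [hUC, span_le]
    rintro - ⟨u', hu', rfl⟩
    simp only [SetLike.mem_coe, LinearMap.mem_ker, LinearMap.flip_apply]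
    exact LinearMap.mem_ker.mp (hgen u' hu' hy)
  have hUCu : ∀ c ∈ UC, bC d c u = 0 := by
    intro c hc
    have h1 : bC d c x = 0 := LinearMap.mem_ker.mp (hUCx hc)
    have h2 : bC d c y = 0 := LinearMap.mem_ker.mp (hUCy hc)
    have h3 : x = y + u := hyu.symm
    have h4 : bC d c x = bC d c y + bC d c u := by rw [h3, map_add]
    rw [h1, h2, zero_add] at h4
    exact h4.symm
  set bu := finBasis ℚ U with hbu
  set G := Matrix.of (fun a b => dotQ d (bu a : Fin d → ℚ) (bu b : Fin d → ℚ)) with hGdef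
  have hGdet : G.det ≠ 0 := gram_det_ne_zero U
  have hu_span : u ∈ span ℂ (Set.range fun a => qc (bu a : Fin d → ℚ)) :=
    span_qc_le_basis U bu hu
  obtain ⟨z, hz⟩ := (mem_span_range_iff_exists_fun ℂ).mp hu_span
  have hz0 : (G.map (Rat.cast : ℚ → ℂ)).mulVec z = 0 := by
    funext b
    have hb : bC d (qc (bu b : Fin d → ℚ)) u = 0 :=
      hUCu _ (subset_span ⟨(bu b : Fin d → ℚ), (bu b).2, rfl⟩)
    rw [← hz, map_sum] at hb
    have hterm : ∀ a, bC d (qc (bu b : Fin d → ℚ)) (z a • qc (bu a : Fin d → ℚ))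
        = (G.map (Rat.cast : ℚ → ℂ)) b a * z a := by
      intro a
      rw [map_smul, smul_eq_mul]
      have : bC d (qc (bu b : Fin d → ℚ)) (qc (bu a : Fin d → ℚ))
          = ((dotQ d (bu b : Fin d → ℚ) (bu a : Fin d → ℚ) : ℚ) : ℂ) := by
        rw [bC_apply, dotQ_apply]
        simp only [qc]; push_cast; rfl
      rw [this]
      simp only [Matrix.map_apply, hGdef, Matrix.of_apply]
      ring
    rw [Finset.sum_congr rfl fun a _ => hterm a] at hb
    simpa [Matrix.mulVec, dotProduct] using hb
  have hzz : z = 0 := by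
    by_contra hzne
    have hdet0 : (G.map (Rat.cast : ℚ → ℂ)).det = 0 :=
      Matrix.exists_mulVec_eq_zero_iff.mp ⟨z, hzne, hz0⟩
    have hmapdet : ((Rat.castHom ℂ) G.det) = (G.map (Rat.cast : ℚ → ℂ)).det := by
      rw [RingHom.map_det]
      rfl
    rw [← hmapdet] at hdet0
    have : (G.det : ℂ) = 0 := hdet0
    exact hGdet (by exact_mod_cast this)
  have hu0 : u = 0 := by rw [← hz, hzz]; simp
  have hxy : x = y := by rw [← hyu, hu0, add_zero]
  rw [hxy]
  exact hWCVC hy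

lemma mem_MZ_iff {V : Submodule ℝ (Fin d → ℝ)} {m : Fin d → ℤ} :
    m ∈ MZ V ↔ ∀ v ∈ V, ∑ i, (m i : ℝ) * v i = 0 := Iff.rfl

lemma exists_int_shift (V : Submodule ℝ (Fin d → ℝ)) (x : Fin d → ℂ)
    (hx : ∀ m ∈ MZ V, ∃ k : ℤ, ∑ i, (m i : ℂ) * x i = k) :
    ∃ a : Fin d → ℤ, ∀ m ∈ MZ V, ∑ i, (m i : ℂ) * (x i - (a i : ℂ)) = 0 := by
  classical
  set M := MZ V with hM
  haveI hfin : Module.Finite ℤ ((Fin d → ℤ) ⧸ M) :=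
    Module.Finite.of_surjective M.mkQ (Submodule.mkQ_surjective M)
  haveI hNZ : NoZeroSMulDivisors ℤ ((Fin d → ℤ) ⧸ M) := by
    constructor
    intro c q h
    by_cases hc : c = 0
    · exact Or.inl hc
    · right
      obtain ⟨m, rfl⟩ := Submodule.Quotient.mk_surjective M q
      rw [← Submodule.Quotient.mk_smul, Submodule.Quotient.mk_eq_zero] at h
      rw [Submodule.Quotient.mk_eq_zero]
      show ∀ v ∈ V, ∑ i, (m i : ℝ) * v i = 0
      intro v hv
      have h2 : ∑ i, (((c • m) i : ℤ) : ℝ) * v i = 0 := h v hv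
      have h3 : ∀ i, (((c • m) i : ℤ) : ℝ) * v i = (c : ℝ) * ((m i : ℝ) * v i) := by
        intro i; push_cast [Pi.smul_apply, smul_eq_mul]; ring
      rw [Finset.sum_congr rfl fun i _ => h3 i, ← Finset.mul_sum] at h2
      exact (mul_eq_zero.mp h2).resolve_left (Int.cast_ne_zero.mpr hc)
  haveI : Module.Free ℤ ((Fin d → ℤ) ⧸ M) := Module.free_of_finite_type_torsion_free'
  obtain ⟨sec, hsec⟩ := Module.projective_lifting_property M.mkQ LinearMap.id
      (Submodule.mkQ_surjective M)
  set r : (Fin d → ℤ) →ₗ[ℤ] (Fin d → ℤ) := LinearMap.id - sec.comp M.mkQ with hr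
  have hrmem : ∀ v, r v ∈ M := by
    intro v
    rw [← Submodule.ker_mkQ M, LinearMap.mem_ker]
    have h2 : M.mkQ (sec (M.mkQ v)) = M.mkQ v := LinearMap.congr_fun hsec (M.mkQ v)
    simp only [hr, LinearMap.sub_apply, LinearMap.id_apply, LinearMap.comp_apply, map_sub, h2,
      sub_self]
  have hrid : ∀ m ∈ M, r m = m := by
    intro m hm
    have h0 : M.mkQ m = 0 := by
      rw [Submodule.mkQ_apply, Submodule.Quotient.mk_eq_zero]; exact hm
    simp [hr, LinearMap.sub_apply, LinearMap.comp_apply, h0]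
  choose K hK using hx
  have hadd : ∀ v w : Fin d → ℤ,
      K (r (v + w)) (hrmem _) = K (r v) (hrmem _) + K (r w) (hrmem _) := by
    intro v w
    have h1 := hK (r (v + w)) (hrmem _)
    have h2 := hK (r v) (hrmem _)
    have h3 := hK (r w) (hrmem _)
    have key : ((K (r (v + w)) (hrmem _) : ℤ) : ℂ)
        = ((K (r v) (hrmem _) : ℤ) : ℂ) + ((K (r w) (hrmem _) : ℤ) : ℂ) := by
      rw [← h1, ← h2, ← h3, map_add r, ← Finset.sum_add_distrib]
      refine Finset.sum_congr rfl fun i _ => ?_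
      push_cast [Pi.add_apply]
      ring
    exact_mod_cast key
  have hsmul : ∀ (c : ℤ) (v : Fin d → ℤ),
      K (r (c • v)) (hrmem _) = c * K (r v) (hrmem _) := by
    intro c v
    have h1 := hK (r (c • v)) (hrmem _)
    have h2 := hK (r v) (hrmem _)
    have key : ((K (r (c • v)) (hrmem _) : ℤ) : ℂ) = (c : ℂ) * ((K (r v) (hrmem _) : ℤ) : ℂ) := by
      rw [← h1, ← h2, map_smul r, Finset.mul_sum]
      refine Finset.sum_congr rfl fun i _ => ?_
      push_cast [Pi.smul_apply, smul_eq_mul]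
      ring
    exact_mod_cast key
  let hL : (Fin d → ℤ) →ₗ[ℤ] ℤ :=
    { toFun := fun v => K (r v) (hrmem v)
      map_add' := hadd
      map_smul' := hsmul }
  set e : Fin d → (Fin d → ℤ) := fun i => fun j => if i = j then 1 else 0 with he
  have hLsum : ∀ v : Fin d → ℤ, hL v = ∑ i, v i * hL (e i) := by
    intro v
    conv_lhs => rw [pi_eq_sum_univ v, map_sum]
    refine Finset.sum_congr rfl fun i _ => ?_
    rw [map_smul, smul_eq_mul]
  refine ⟨fun i => hL (e i), ?_⟩
  intro m hm
  have h2 : ((hL m : ℤ) : ℂ) = ∑ i, (m i : ℂ) * x i := by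
    show ((K (r m) (hrmem m) : ℤ) : ℂ) = _
    rw [← hK (r m) (hrmem m)]
    refine Finset.sum_congr rfl fun i _ => ?_
    rw [hrid m hm]
  have h3 : ((hL m : ℤ) : ℂ) = ∑ i, (m i : ℂ) * ((hL (e i) : ℤ) : ℂ) := by
    rw [hLsum m]
    push_cast
    rfl
  have h5 : ∑ i, (m i : ℂ) * (x i - ((hL (e i) : ℤ) : ℂ))
      = ∑ i, (m i : ℂ) * x i - ∑ i, (m i : ℂ) * ((hL (e i) : ℤ) : ℂ) := by
    rw [← Finset.sum_sub_distrib]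
    exact Finset.sum_congr rfl fun i _ => by ring
  rw [h5, ← h2, ← h3, sub_self]

lemma mem_of_dvd_all (L : AddSubgroup (Fin d → ℤ)) {t : Fin d → ℤ}
    (ht : ∀ i, t i ≠ 0 ∧ (fun j => if i = j then t i else 0) ∈ L)
    {N : ℤ} (hN : ∀ i, t i ∣ N) (m : Fin d → ℤ) (hm : ∀ i, N ∣ m i) : m ∈ L := by
  classical
  have hdvd : ∀ i, t i ∣ m i := fun i => (hN i).trans (hm i)
  have hrepr : m = ∑ i, (m i / t i) • (fun j => if i = j then t i else 0 : Fin d → ℤ) := by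
    funext j
    rw [Finset.sum_apply]
    have : ∀ i, ((m i / t i) • (fun j' => if i = j' then t i else 0 : Fin d → ℤ)) j
        = if i = j then m i / t i * t i else 0 := by
      intro i
      simp only [Pi.smul_apply, smul_eq_mul]
      split_ifs <;> ring
    rw [Finset.sum_congr rfl fun i _ => this i]
    simp [Finset.sum_ite_eq' Finset.univ j (fun i => m i / t i * t i),
      Int.ediv_mul_cancel (hdvd j)]
  rw [hrepr]
  exact AddSubgroup.sum_mem L fun i _ => AddSubgroup.zsmul_mem L (ht i).2 _

lemma quotient_finite_of_full (L : AddSubgroup (Fin d → ℤ))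
    (h : ∀ i : Fin d, ∃ t : ℤ, t ≠ 0 ∧ (fun j => if i = j then t else 0) ∈ L) :
    Finite ((Fin d → ℤ) ⧸ L) := by
  classical
  choose t ht using h
  set N : ℤ := ∏ i, t i with hNdef
  have hN0 : N ≠ 0 := Finset.prod_ne_zero_iff.mpr fun i _ => (ht i).1
  have hNdvd : ∀ i, t i ∣ N := fun i => Finset.dvd_prod_of_mem t (Finset.mem_univ i)
  set n : ℕ := N.natAbs with hn
  haveI : NeZero n := ⟨by simpa [hn] using hN0⟩
  have hsurj : Function.Surjective
      (fun v : Fin d → ZMod n => ((QuotientAddGroup.mk (fun i => ((v i).val : ℤ)))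
        : (Fin d → ℤ) ⧸ L)) := by
    intro q
    obtain ⟨m, rfl⟩ := QuotientAddGroup.mk_surjective q
    refine ⟨fun i => ((m i : ZMod n)), ?_⟩
    rw [QuotientAddGroup.eq]
    refine mem_of_dvd_all L (fun i => ⟨(ht i).1, (ht i).2⟩) hNdvd _ ?_
    intro i
    have h1 : (((-(fun i => (((m i : ZMod n)).val : ℤ)) + m) i : ℤ) : ZMod n) = 0 := by
      simp only [Pi.add_apply, Pi.neg_apply, Int.cast_add, Int.cast_neg, Int.cast_natCast,
        ZMod.natCast_val, ZMod.cast_id, ZMod.intCast_zmod_cast, neg_add_cancel]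
    have h2 := (ZMod.intCast_zmod_eq_zero_iff_dvd _ n).mp h1
    have h3 : ((n : ℤ)) ∣ _ := h2
    calc N ∣ (n : ℤ) := (Int.dvd_natAbs.mpr dvd_rfl)
      _ ∣ _ := h3
  exact Finite.of_surjective _ hsurj

lemma exists_full_singles {V₁ V₂ : Submodule ℝ (Fin d → ℝ)}
    {s₁ s₂ : Set (Fin d → ℚ)}
    (hrat₁ : V₁ = Submodule.span ℝ (qr '' s₁)) (hrat₂ : V₂ = Submodule.span ℝ (qr '' s₂))
    (hsup : V₁ ⊔ V₂ = ⊤) :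
    ∀ i : Fin d, ∃ t : ℤ, t ≠ 0 ∧
      (fun j => if i = j then t else 0) ∈ (intLattice d V₁ ⊔ intLattice d V₂) := by
  classical
  set Λ : Set (Fin d → ℤ) := {m | zr m ∈ V₁} ∪ {m | zr m ∈ V₂} with hΛ
  have hspan : Submodule.span ℝ (zr '' Λ) = ⊤ := by
    rw [eq_top_iff, ← hsup, sup_le_iff]
    have himg : zr '' Λ = (zr '' {m | zr m ∈ V₁}) ∪ (zr '' {m | zr m ∈ V₂}) :=
      Set.image_union _ _ _
    constructor
    · exact (span_intLattice hrat₁).trans (span_mono (by rw [himg]; exact Set.subset_union_left))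
    · exact (span_intLattice hrat₂).trans (span_mono (by rw [himg]; exact Set.subset_union_right))
  obtain ⟨b, hbsub, hbspan, hbli⟩ := exists_linearIndependent ℝ (zr '' Λ)
  rw [hspan] at hbspan
  let B : Basis b ℝ (Fin d → ℝ) := Basis.mk hbli (by rw [Subtype.range_coe, hbspan])
  haveI : Fintype b := FiniteDimensional.fintypeBasisIndex B
  have hcard : Fintype.card b = d := by
    rw [← Module.finrank_eq_card_basis B, Module.finrank_fin_fun]
  let eb : Fin d ≃ b := (Fintype.equivFinOfCardEq hcard).symm
  have hm : ∀ k : Fin d, ∃ m : Fin d → ℤ, m ∈ Λ ∧ zr m = ((eb k : Fin d → ℝ)) := by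
    intro k
    obtain ⟨m, hmΛ, hmeq⟩ := hbsub (eb k).2
    exact ⟨m, hmΛ, hmeq⟩
  choose mv hmΛ hmeq using hm
  set Uz : Matrix (Fin d) (Fin d) ℤ := Matrix.of (fun i k => mv k i) with hUz
  let B' : Basis (Fin d) ℝ (Fin d → ℝ) := B.reindex eb.symm
  have hB' : ∀ k, B' k = zr (mv k) := by
    intro k
    rw [Module.Basis.reindex_apply, Equiv.symm_symm]
    rw [show B (eb k) = ((eb k : Fin d → ℝ)) from Basis.mk_apply _ _ _]
    exact (hmeq k).symm
  haveI hinv := (Pi.basisFun ℝ (Fin d)).invertibleToMatrix B'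
  have hdetR : ((Pi.basisFun ℝ (Fin d)).toMatrix B').det ≠ 0 :=
    (Matrix.isUnit_det_of_invertible _).ne_zero
  have htoM : (Pi.basisFun ℝ (Fin d)).toMatrix B' = Uz.map (Int.cast : ℤ → ℝ) := by
    ext i k
    rw [Basis.toMatrix_apply, Pi.basisFun_repr, hB']
    simp [hUz, zr]
  have hdetZ : Uz.det ≠ 0 := by
    intro h0
    have h1 : ((Int.castRingHom ℝ) Uz.det) = (Uz.map (Int.cast : ℤ → ℝ)).det :=
      RingHom.map_det (Int.castRingHom ℝ) Uz
    rw [htoM] at hdetR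
    rw [h0] at h1
    simp only [map_zero] at h1
    exact hdetR h1.symm
  intro i
  refine ⟨Uz.det, hdetZ, ?_⟩
  set ei : Fin d → ℤ := fun j => if i = j then 1 else 0 with hei
  set w : Fin d → ℤ := (Uz.adjugate).mulVec ei with hw
  have hcomb : Uz.mulVec w = fun j => if i = j then Uz.det else 0 := by
    rw [hw, Matrix.mulVec_mulVec, Matrix.mul_adjugate, Matrix.smul_mulVec,
      Matrix.one_mulVec]
    funext j
    simp only [Pi.smul_apply, smul_eq_mul, hei]
    split_ifs <;> ring
  have hcols : ∀ k, mv k ∈ (intLattice d V₁ ⊔ intLattice d V₂) := by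
    intro k
    rcases hmΛ k with h | h
    · exact (le_sup_left : intLattice d V₁ ≤ _) h
    · exact (le_sup_right : intLattice d V₂ ≤ _) h
  have hmv : Uz.mulVec w = ∑ k, w k • mv k := by
    funext j
    simp only [Matrix.mulVec, dotProduct, hUz, Matrix.of_apply, Finset.sum_apply,
      Pi.smul_apply, smul_eq_mul]
    exact Finset.sum_congr rfl fun k _ => mul_comm _ _
  rw [← hcomb, hmv]
  exact AddSubgroup.sum_mem _ fun k _ => AddSubgroup.zsmul_mem _ (hcols k) _

def expUnit (c : ℂ) : ℂˣ := Units.mk0 (Complex.exp c) (Complex.exp_ne_zero c)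

lemma expUnit_val (c : ℂ) : ((expUnit c : ℂˣ) : ℂ) = Complex.exp c := rfl

lemma expUnit_add (c c' : ℂ) : expUnit (c + c') = expUnit c * expUnit c' := by
  ext
  simp [expUnit, Complex.exp_add]

lemma prod_expUnit_zpow (w : Fin d → ℂ) (m : Fin d → ℤ) :
    (∏ i, (expUnit (2 * (Real.pi : ℂ) * Complex.I * w i)) ^ (m i)) = 1
      ↔ ∃ k : ℤ, ∑ i, (m i : ℂ) * w i = (k : ℂ) := by
  have hval : ((∏ i, (expUnit (2 * (Real.pi : ℂ) * Complex.I * w i)) ^ (m i) : ℂˣ) : ℂ)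
      = Complex.exp ((2 * (Real.pi : ℂ) * Complex.I) * ∑ i, (m i : ℂ) * w i) := by
    rw [Units.coe_prod]
    have hterm : ∀ i, (((expUnit (2 * (Real.pi : ℂ) * Complex.I * w i)) ^ (m i) : ℂˣ) : ℂ)
        = Complex.exp ((m i : ℂ) * (2 * (Real.pi : ℂ) * Complex.I * w i)) := by
      intro i
      rw [Units.val_zpow_eq_zpow_val, expUnit_val, Complex.exp_int_mul]
    rw [Finset.prod_congr rfl fun i _ => hterm i, ← Complex.exp_sum]
    congr 1
    rw [Finset.mul_sum]
    exact Finset.sum_congr rfl fun i _ => by ring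
  constructor
  · intro h
    have h1 : Complex.exp ((2 * (Real.pi : ℂ) * Complex.I) * ∑ i, (m i : ℂ) * w i) = 1 := by
      rw [← hval, h, Units.val_one]
    obtain ⟨n, hn⟩ := Complex.exp_eq_one_iff.mp h1
    refine ⟨n, ?_⟩
    have h2 : (2 * (Real.pi : ℂ) * Complex.I) * ∑ i, (m i : ℂ) * w i
        = (2 * (Real.pi : ℂ) * Complex.I) * (n : ℂ) := by rw [hn]; ring
    exact mul_left_cancel₀ Complex.two_pi_I_ne_zero h2
  · rintro ⟨k, hk⟩
    apply Units.ext
    rw [hval, hk, show (2 * (Real.pi : ℂ) * Complex.I) * (k : ℂ)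
      = (k : ℂ) * (2 * (Real.pi : ℂ) * Complex.I) by ring, Units.val_one]
    exact Complex.exp_int_mul_two_pi_mul_I k

end TorusAux

open TorusAux

/-- If `V_1, V_2 ⊆ ℝ^d` are rational linear subspaces of complementary dimensions `p` and
`d − p` meeting only at `0`, then `T_{V_1} ∩ T_{V_2}` is finite of cardinality
`[ℤ^d : (V_1 ∩ ℤ^d) + (V_2 ∩ ℤ^d)]`. -/
theorem torus_inter_card (d p : ℕ) (V₁ V₂ : Submodule ℝ (Fin d → ℝ))
    (hrat₁ : ∃ s : Set (Fin d → ℚ),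
      V₁ = Submodule.span ℝ ((fun (v : Fin d → ℚ) => fun i => (v i : ℝ)) '' s))
    (hrat₂ : ∃ s : Set (Fin d → ℚ),
      V₂ = Submodule.span ℝ ((fun (v : Fin d → ℚ) => fun i => (v i : ℝ)) '' s))
    (hdim₁ : Module.finrank ℝ V₁ = p) (hdim₂ : Module.finrank ℝ V₂ = d - p)
    (hint : V₁ ⊓ V₂ = ⊥) :
    (torus d V₁ ∩ torus d V₂).Finite ∧
      Nat.card ↥(torus d V₁ ∩ torus d V₂)
        = Nat.card ((Fin d → ℤ) ⧸ (intLattice d V₁ ⊔ intLattice d V₂)) := by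
  classical
  obtain ⟨s₁, hrs₁⟩ := hrat₁
  obtain ⟨s₂, hrs₂⟩ := hrat₂
  have hrat₁' : V₁ = Submodule.span ℝ (qr '' s₁) := hrs₁
  have hrat₂' : V₂ = Submodule.span ℝ (qr '' s₂) := hrs₂
  have hp : p ≤ d := by
    have h := Submodule.finrank_le V₁
    rw [Module.finrank_fin_fun, hdim₁] at h
    exact h
  have hsup : V₁ ⊔ V₂ = ⊤ := by
    apply Submodule.eq_top_of_finrank_eq
    have h := Submodule.finrank_sup_add_finrank_inf_eq V₁ V₂
    rw [hint, hdim₁, hdim₂, finrank_bot] at h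
    rw [show Module.finrank ℝ (Fin d → ℝ) = d from Module.finrank_fin_fun ℝ]
    omega
  have hcompl : IsCompl V₁ V₂ := ⟨disjoint_iff.mpr hint, codisjoint_iff.mpr hsup⟩
  set L := intLattice d V₁ ⊔ intLattice d V₂ with hLdef
  haveI hQfin : Finite ((Fin d → ℤ) ⧸ L) :=
    quotient_finite_of_full L (exists_full_singles hrat₁' hrat₂' hsup)
  set P1 := V₁.linearProjOfIsCompl V₂ hcompl with hP1def
  set P2 := V₂.linearProjOfIsCompl V₁ hcompl.symm with hP2def
  have hPsum : ∀ x : Fin d → ℝ, ((P1 x : Fin d → ℝ)) + ((P2 x : Fin d → ℝ)) = x :=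
    fun x => Submodule.projection_add_projection_eq_self hcompl x
  set τ : ℂ := 2 * (Real.pi : ℂ) * Complex.I with hτ
  have hτne : τ ≠ 0 := Complex.two_pi_I_ne_zero
  set g0 : (Fin d → ℤ) → (Fin d → ℂˣ) := fun c i =>
    expUnit (τ * ((P2 (zr c) : Fin d → ℝ) i)) with hg0
  have hg0mem : ∀ c, g0 c ∈ torus d V₁ ∩ torus d V₂ := by
    intro c
    have hcast : ∀ m : Fin d → ℤ, ∀ r : ℝ,
        (∑ i, (m i : ℝ) * ((P2 (zr c) : Fin d → ℝ)) i = r) →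
        ∑ i, (m i : ℂ) * (((P2 (zr c) : Fin d → ℝ)) i : ℂ) = ((r : ℝ) : ℂ) := by
      intro m r hr
      rw [← hr]
      push_cast
      rfl
    constructor
    · intro m hm
      have hreal : ∑ i, (m i : ℝ) * ((P2 (zr c) : Fin d → ℝ)) i
          = ((∑ i, m i * c i : ℤ) : ℝ) := by
        have h1 : ∀ i, (m i : ℝ) * ((P2 (zr c) : Fin d → ℝ)) i
            = (m i : ℝ) * (zr c i) - (m i : ℝ) * ((P1 (zr c) : Fin d → ℝ)) i := by
          intro i
          have h2 := congrFun (hPsum (zr c)) i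
          simp only [Pi.add_apply] at h2
          have h3 : ((P2 (zr c) : Fin d → ℝ)) i = zr c i - ((P1 (zr c) : Fin d → ℝ)) i := by
            linarith
          rw [h3]; ring
        rw [Finset.sum_congr rfl fun i _ => h1 i, Finset.sum_sub_distrib]
        have hP1 : ∑ i, (m i : ℝ) * ((P1 (zr c) : Fin d → ℝ)) i = 0 :=
          hm _ (P1 (zr c)).2
        rw [hP1, sub_zero]
        push_cast
        rfl
      refine (prod_expUnit_zpow _ m).mpr ⟨∑ i, m i * c i, ?_⟩
      have := hcast m _ hreal
      rw [this]
      push_cast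
      rfl
    · intro m hm
      have hreal : ∑ i, (m i : ℝ) * ((P2 (zr c) : Fin d → ℝ)) i = (0 : ℝ) :=
        hm _ (P2 (zr c)).2
      refine (prod_expUnit_zpow _ m).mpr ⟨0, ?_⟩
      have := hcast m _ hreal
      rw [this]
      push_cast
      rfl
  have hzr_add : ∀ c c' : Fin d → ℤ, zr (c + c') = zr c + zr c' := by
    intro c c'; funext j; simp [zr]
  have hg0add : ∀ c c', g0 (c + c') = g0 c * g0 c' := by
    intro c c'
    funext i
    simp only [hg0, Pi.mul_apply]
    rw [← expUnit_add]
    congr 1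
    rw [hzr_add, map_add]
    push_cast [Submodule.coe_add, Pi.add_apply]
    ring
  have hg0zero : g0 (0 : Fin d → ℤ) = 1 := by
    funext i
    have hz0 : zr (0 : Fin d → ℤ) = 0 := by funext j; simp [zr]
    apply Units.ext
    simp only [hg0, hz0, map_zero, Pi.one_apply, Units.val_one, expUnit_val]
    simp
  have hg0neg : ∀ c, g0 (-c) = (g0 c)⁻¹ := by
    intro c
    have h1 : g0 (-c) * g0 c = 1 := by rw [← hg0add, neg_add_cancel, hg0zero]
    exact eq_inv_of_mul_eq_one_left h1
  have hg0L : ∀ ℓ ∈ L, g0 ℓ = 1 := by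
    intro ℓ hℓ
    obtain ⟨ℓ₁, hℓ₁, ℓ₂, hℓ₂, rfl⟩ := AddSubgroup.mem_sup.mp hℓ
    have hm₁ : zr ℓ₁ ∈ V₁ := hℓ₁
    have hm₂ : zr ℓ₂ ∈ V₂ := hℓ₂
    have h1 : P2 (zr ℓ₁) = 0 :=
      (Submodule.linearProjOfIsCompl_apply_eq_zero_iff hcompl.symm).mpr hm₁
    have h2' : P2 (zr ℓ₂) = ⟨zr ℓ₂, hm₂⟩ := by
      rw [hP2def]
      exact Submodule.linearProjOfIsCompl_apply_left hcompl.symm ⟨zr ℓ₂, hm₂⟩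
    have h2 : ((P2 (zr ℓ₂) : Fin d → ℝ)) = zr ℓ₂ := by rw [h2']
    funext i
    apply Units.ext
    simp only [hg0, Pi.one_apply, Units.val_one, expUnit_val]
    have h4 : ((P2 (zr (ℓ₁ + ℓ₂)) : Fin d → ℝ)) i = (ℓ₂ i : ℝ) := by
      have h5 : P2 (zr (ℓ₁ + ℓ₂)) = P2 (zr ℓ₂) := by
        rw [hzr_add, map_add, h1, zero_add]
      rw [h5, h2]
      rfl
    rw [h4, show τ * ((ℓ₂ i : ℝ) : ℂ) = ((ℓ₂ i : ℤ) : ℂ) * (2 * (Real.pi : ℂ) * Complex.I) by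
      rw [hτ]; push_cast; ring]
    exact Complex.exp_int_mul_two_pi_mul_I (ℓ₂ i)
  have hg0ker : ∀ c, g0 c = 1 → c ∈ L := by
    intro c hc
    have hk : ∀ i, ∃ k : ℤ, ((P2 (zr c) : Fin d → ℝ)) i = (k : ℝ) := by
      intro i
      have h1 : Complex.exp (τ * (((P2 (zr c) : Fin d → ℝ)) i : ℂ)) = 1 := by
        have h2 := congrFun hc i
        have h3 := congrArg (Units.val) h2
        simpa only [hg0, expUnit_val, Pi.one_apply, Units.val_one] using h3
      obtain ⟨n, hn⟩ := Complex.exp_eq_one_iff.mp h1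
      refine ⟨n, ?_⟩
      have h4 : τ * ((((P2 (zr c) : Fin d → ℝ)) i : ℝ) : ℂ) = τ * ((n : ℤ) : ℂ) := by
        rw [hn, hτ]; ring
      have h5 := mul_left_cancel₀ hτne h4
      exact_mod_cast h5
    choose k hkk using hk
    have hbV₂ : zr k ∈ V₂ := by
      have h6 : zr k = ((P2 (zr c) : Fin d → ℝ)) := by
        funext i; exact (hkk i).symm
      rw [h6]; exact (P2 (zr c)).2
    have hcb : zr (c - k) ∈ V₁ := by
      have h7 : zr (c - k) = ((P1 (zr c) : Fin d → ℝ)) := by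
        funext i
        show ((c i - k i : ℤ) : ℝ) = ((P1 (zr c) : Fin d → ℝ)) i
        have h8' : ((P1 (zr c) : Fin d → ℝ)) i + ((P2 (zr c) : Fin d → ℝ)) i = ((c i : ℤ) : ℝ) :=
          congrFun (hPsum (zr c)) i
        have h9 := hkk i
        push_cast
        linarith
      rw [h7]; exact (P1 (zr c)).2
    have h10 : c = (c - k) + k := by ring
    rw [h10]
    have hmem₁ : (c - k) ∈ intLattice d V₁ := hcb
    have hmem₂ : k ∈ intLattice d V₂ := hbV₂
    exact AddSubgroup.add_mem _ ((le_sup_left : intLattice d V₁ ≤ L) hmem₁)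
      ((le_sup_right : intLattice d V₂ ≤ L) hmem₂)
  have hsurj : ∀ z ∈ torus d V₁ ∩ torus d V₂, ∃ c : Fin d → ℤ, g0 c = z := by
    intro z hz
    have hlog : ∀ i, ∃ w : ℂ, Complex.exp (τ * w) = (z i : ℂ) := by
      intro i
      have hne : (z i : ℂ) ∈ ({0}ᶜ : Set ℂ) := by
        simp [Units.ne_zero (z i)]
      rw [← Complex.range_exp] at hne
      obtain ⟨c0, hc0⟩ := hne
      exact ⟨c0 / τ, by rw [mul_div_cancel₀ _ hτne]; exact hc0⟩
    choose w hw using hlog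
    have hzw : ∀ i, z i = expUnit (τ * w i) := by
      intro i
      exact Units.ext (hw i).symm
    have hxcond : ∀ (V : Submodule ℝ (Fin d → ℝ)), z ∈ torus d V →
        ∀ m ∈ MZ V, ∃ kk : ℤ, ∑ i, (m i : ℂ) * w i = (kk : ℂ) := by
      intro V hzV m hm
      have h1 := hzV m (mem_MZ_iff.mp hm)
      rw [Finset.prod_congr rfl fun i _ => by rw [hzw i]] at h1
      exact (prod_expUnit_zpow w m).mp h1
    obtain ⟨a, ha⟩ := exists_int_shift V₁ w (hxcond V₁ hz.1)
    obtain ⟨b, hb⟩ := exists_int_shift V₂ w (hxcond V₂ hz.2)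
    have hxa : (fun i => w i - ((a i : ℤ) : ℂ)) ∈ VC V₁ :=
      mem_VC_of_orth hrat₁' _ ha
    have hxb : (fun i => w i - ((b i : ℤ) : ℂ)) ∈ VC V₂ :=
      mem_VC_of_orth hrat₂' _ hb
    refine ⟨a - b, ?_⟩
    have hd1 : rc ((P1 (zr (a - b)) : Fin d → ℝ)) ∈ VC V₁ := rc_mem_VC (P1 _).2
    have hd2 : rc ((P2 (zr (a - b)) : Fin d → ℝ)) ∈ VC V₂ := rc_mem_VC (P2 _).2
    set u : Fin d → ℂ :=
      rc ((P2 (zr (a - b)) : Fin d → ℝ)) - (fun i => w i - ((b i : ℤ) : ℂ)) with hu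
    have huV₂ : u ∈ VC V₂ := Submodule.sub_mem _ hd2 hxb
    have huV₁ : u ∈ VC V₁ := by
      have h11 : u = -(fun i => w i - ((a i : ℤ) : ℂ)) - rc ((P1 (zr (a - b)) : Fin d → ℝ)) := by
        funext i
        simp only [hu, Pi.sub_apply, Pi.neg_apply, rc]
        have h12 := congrFun (hPsum (zr (a - b))) i
        simp only [Pi.add_apply] at h12
        have h13 : (((P1 (zr (a - b)) : Fin d → ℝ)) i : ℂ)
            + (((P2 (zr (a - b)) : Fin d → ℝ)) i : ℂ) = ((a i : ℤ) : ℂ) - ((b i : ℤ) : ℂ) := by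
          have h14 : ((P1 (zr (a - b)) : Fin d → ℝ)) i + ((P2 (zr (a - b)) : Fin d → ℝ)) i
              = (a i : ℝ) - (b i : ℝ) := by
            rw [h12]
            show ((a i - b i : ℤ) : ℝ) = (a i : ℝ) - (b i : ℝ)
            push_cast
            ring
          calc (((P1 (zr (a - b)) : Fin d → ℝ)) i : ℂ)
              + (((P2 (zr (a - b)) : Fin d → ℝ)) i : ℂ)
              = ((((P1 (zr (a - b)) : Fin d → ℝ)) i + ((P2 (zr (a - b)) : Fin d → ℝ)) i : ℝ) : ℂ)
                := by push_cast; rfl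
            _ = _ := by rw [h14]; norm_cast
        linear_combination h13
      rw [h11]
      exact Submodule.sub_mem _ (Submodule.neg_mem _ hxa) hd1
    have hu0 : u = 0 := by
      have h15 : u ∈ VC V₁ ⊓ VC V₂ := Submodule.mem_inf.mpr ⟨huV₁, huV₂⟩
      rw [VC_inf hdim₁ hdim₂ hsup] at h15
      exact h15
    funext i
    apply Units.ext
    simp only [hg0, expUnit_val]
    have h16 : (((P2 (zr (a - b)) : Fin d → ℝ)) i : ℂ) = w i - ((b i : ℤ) : ℂ) := by
      have h17 := congrFun hu0 i
      simp only [hu, Pi.sub_apply, rc, Pi.zero_apply] at h17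
      linear_combination h17
    rw [h16, mul_sub, Complex.exp_sub, hw i]
    rw [show τ * ((b i : ℤ) : ℂ) = ((b i : ℤ) : ℂ) * (2 * (Real.pi : ℂ) * Complex.I) by
      rw [hτ]; ring]
    rw [Complex.exp_int_mul_two_pi_mul_I (b i)]
    exact div_one _
  set F : ((Fin d → ℤ) ⧸ L) → ↥(torus d V₁ ∩ torus d V₂) := fun q =>
    Quotient.liftOn' q (fun c => (⟨g0 c, hg0mem c⟩ : ↥(torus d V₁ ∩ torus d V₂)))
      (by
        intro c c' hcc
        have h1 : -c + c' ∈ L := QuotientAddGroup.leftRel_apply.mp hcc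
        apply Subtype.ext
        show g0 c = g0 c'
        have h2 : c' = c + (-c + c') := by rw [add_neg_cancel_left]
        rw [h2, hg0add, hg0L _ h1, mul_one]) with hF
  have hFbij : Function.Bijective F := by
    constructor
    · intro q q'
      refine Quotient.inductionOn₂' q q' ?_
      intro c c' h
      have h1 : g0 c = g0 c' := congrArg Subtype.val h
      have h2 : g0 (-c + c') = 1 := by
        rw [hg0add, hg0neg, h1, inv_mul_cancel]
      exact Quotient.sound' (QuotientAddGroup.leftRel_apply.mpr (hg0ker _ h2))
    · intro z
      obtain ⟨c, hc⟩ := hsurj z z.2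
      exact ⟨Quotient.mk'' c, Subtype.ext hc⟩
  constructor
  · haveI hfin : Finite ↥(torus d V₁ ∩ torus d V₂) := Finite.of_surjective F hFbij.2
    exact Set.finite_coe_iff.mp hfin
  · exact (Nat.card_congr (Equiv.ofBijective F hFbij)).symm


end
end

section
/- Let A ⊆ ℝ^d be a finite nonempty set, c : A → ℝ, and q(x) = max_{α ∈ A} (c(α) + ⟨α, x⟩). Then the union over all x ∈ ℝ^d of the subdifferentials of q equals the Newton polytope of q: ⋃_{x ∈ ℝ^d} ∂q(x) = convexHull(A). -/
open MeasureTheory InnerProductSpace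

noncomputable section

private lemma sup'_add_const {ι : Type*} (s : Finset ι) (h : s.Nonempty) (f : ι → ℝ) (t : ℝ) :
    (s.sup' h fun a => f a + t) = s.sup' h f + t := by
  apply le_antisymm
  · exact Finset.sup'_le _ _ fun a ha => add_le_add_left (Finset.le_sup' f ha) t
  · obtain ⟨a, ha, hEq⟩ := Finset.exists_mem_eq_sup' h f
    rw [hEq]
    exact Finset.le_sup' (fun a => f a + t) ha

private lemma exists_subgrad_aux (d : ℕ) (n : ℕ) :
    ∀ (A : Finset (EuclideanSpace ℝ (Fin d))), A.card ≤ n → ∀ (hA : A.Nonempty)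
      (c : EuclideanSpace ℝ (Fin d) → ℝ) (ξ : EuclideanSpace ℝ (Fin d)),
      ξ ∈ convexHull ℝ (A : Set (EuclideanSpace ℝ (Fin d))) →
      ∃ x : EuclideanSpace ℝ (Fin d), ∀ y,
        ⟪ξ, y - x⟫_ℝ ≤ (A.sup' hA fun α => c α + ⟪α, y⟫_ℝ)
          - (A.sup' hA fun α => c α + ⟪α, x⟫_ℝ) := by
  induction n with
  | zero =>
    intro A hcard hA
    have := Finset.card_pos.mpr hA
    omega
  | succ n ih =>
    intro A hcard hA c ξ hξ
    classical
    set V : Submodule ℝ (EuclideanSpace ℝ (Fin d)) :=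
      Submodule.span ℝ ((fun α => α - ξ) '' (A : Set (EuclideanSpace ℝ (Fin d)))) with hV
    by_cases hcase : ∃ w, w ∈ V ∧ w ≠ 0 ∧ ∀ α ∈ A, ⟪α - ξ, w⟫_ℝ ≤ 0
    · -- Case 2: degenerate direction; pass to a smaller active set.
      obtain ⟨w, hwV, hw0, hwle⟩ := hcase
      -- some strict inequality
      have hstrict : ∃ α ∈ A, ⟪α - ξ, w⟫_ℝ < 0 := by
        by_contra hno
        push_neg at hno
        have hall : ∀ α ∈ A, ⟪α - ξ, w⟫_ℝ = 0 :=
          fun α hα => le_antisymm (hwle α hα) (hno α hα)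
        have horth : ∀ v ∈ V, ⟪v, w⟫_ℝ = 0 := by
          intro v hv
          induction hv using Submodule.span_induction with
          | mem v hv =>
            obtain ⟨α, hα, rfl⟩ := hv
            exact hall α hα
          | zero => simp
          | add u v _ _ hu hv => rw [inner_add_left, hu, hv, add_zero]
          | smul r v _ hv => rw [real_inner_smul_left, hv, mul_zero]
        exact hw0 (inner_self_eq_zero.mp (horth w hwV))
      obtain ⟨α₀, hα₀A, hα₀⟩ := hstrict
      -- convex combination weights
      rw [Finset.convexHull_eq] at hξ
      obtain ⟨lam, hlam0, hlam1, hlamc⟩ := hξ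
      have hξsum : ∑ α ∈ A, lam α • α = ξ := by
        rw [← hlamc, Finset.centerMass_eq_of_sum_1 _ _ hlam1]
        simp
      have hsum0 : ∑ α ∈ A, lam α * ⟪α - ξ, w⟫_ℝ = 0 := by
        have h1 : ∑ α ∈ A, lam α • (α - ξ) = 0 := by
          have h2 : ∑ α ∈ A, lam α • (α - ξ)
              = (∑ α ∈ A, lam α • α) - (∑ α ∈ A, lam α) • ξ := by
            rw [Finset.sum_smul, ← Finset.sum_sub_distrib]
            exact Finset.sum_congr rfl fun α _ => smul_sub _ _ _
          rw [h2, hξsum, hlam1, one_smul, sub_self]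
        calc ∑ α ∈ A, lam α * ⟪α - ξ, w⟫_ℝ
            = ⟪∑ α ∈ A, lam α • (α - ξ), w⟫_ℝ := by
              rw [sum_inner]
              exact Finset.sum_congr rfl fun α _ => (real_inner_smul_left _ _ _).symm
          _ = 0 := by rw [h1, inner_zero_left]
      have hzero : ∀ α ∈ A, lam α * ⟪α - ξ, w⟫_ℝ = 0 :=
        (Finset.sum_eq_zero_iff_of_nonpos fun α hα =>
          mul_nonpos_of_nonneg_of_nonpos (hlam0 α hα) (hwle α hα)).mp hsum0
      set A' : Finset (EuclideanSpace ℝ (Fin d)) :=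
        A.filter (fun α => ⟪α - ξ, w⟫_ℝ = 0) with hA'
      have hA'sub : A' ⊆ A := Finset.filter_subset _ _
      have hlamzero : ∀ α ∈ A, α ∉ A' → lam α = 0 := by
        intro α hα hα'
        have hne : ⟪α - ξ, w⟫_ℝ ≠ 0 := by
          intro h
          exact hα' (Finset.mem_filter.mpr ⟨hα, h⟩)
        rcases mul_eq_zero.mp (hzero α hα) with h | h
        · exact h
        · exact absurd h hne
      have hsum1' : ∑ α ∈ A', lam α = 1 := by
        rw [← hlam1]
        exact Finset.sum_subset hA'sub (fun α hα h => hlamzero α hα h)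
      have hA'ne : A'.Nonempty := by
        by_contra h
        rw [Finset.not_nonempty_iff_eq_empty] at h
        rw [h, Finset.sum_empty] at hsum1'
        exact one_ne_zero hsum1'.symm
      have hξ' : ξ ∈ convexHull ℝ (A' : Set (EuclideanSpace ℝ (Fin d))) := by
        have hcm : A'.centerMass lam id = ξ := by
          rw [Finset.centerMass_eq_of_sum_1 _ _ hsum1']
          simp only [id]
          rw [← hξsum]
          exact Finset.sum_subset hA'sub (fun α hα h => by rw [hlamzero α hα h, zero_smul])
        exact hcm ▸ A'.centerMass_id_mem_convexHull
          (fun α hα => hlam0 α (hA'sub hα)) (by rw [hsum1']; norm_num)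
      have hα₀A' : α₀ ∉ A' := by
        intro h
        exact absurd (Finset.mem_filter.mp h).2 (ne_of_lt hα₀)
      have hcard' : A'.card ≤ n := by
        have hlt : A'.card < A.card :=
          Finset.card_lt_card ⟨hA'sub, fun h => hα₀A' (h hα₀A)⟩
        omega
      obtain ⟨x', hx'⟩ := ih A' hcard' hA'ne c ξ hξ'
      set q' : EuclideanSpace ℝ (Fin d) → ℝ :=
        fun y => A'.sup' hA'ne fun α => c α + ⟪α, y⟫_ℝ with hq'
      set B : Finset (EuclideanSpace ℝ (Fin d)) := A \ A' with hB
      have hα₀B : α₀ ∈ B := Finset.mem_sdiff.mpr ⟨hα₀A, hα₀A'⟩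
      have hBne : B.Nonempty := ⟨α₀, hα₀B⟩
      set T : ℝ := max 0 (B.sup' hBne fun α => (c α + ⟪α, x'⟫_ℝ - q' x') / (-⟪α - ξ, w⟫_ℝ))
        with hT
      have hT0 : 0 ≤ T := le_max_left _ _
      set x : EuclideanSpace ℝ (Fin d) := x' + T • w with hx
      have key1 : ∀ α ∈ A', ⟪α, w⟫_ℝ = ⟪ξ, w⟫_ℝ := by
        intro α hα
        have h := (Finset.mem_filter.mp hα).2
        rw [inner_sub_left] at h
        linarith
      have hterm : ∀ α : EuclideanSpace ℝ (Fin d),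
          c α + ⟪α, x⟫_ℝ = c α + ⟪α, x'⟫_ℝ + T * ⟪α, w⟫_ℝ := by
        intro α
        rw [hx, inner_add_right, real_inner_smul_right]
        ring
      have key2 : q' x = q' x' + T * ⟪ξ, w⟫_ℝ := by
        have h1 : (A'.sup' hA'ne fun α => c α + ⟪α, x⟫_ℝ)
            = A'.sup' hA'ne fun α => (c α + ⟪α, x'⟫_ℝ) + T * ⟪ξ, w⟫_ℝ := by
          apply Finset.sup'_congr hA'ne rfl
          intro α hα
          rw [hterm α, key1 α hα]
        exact h1.trans (sup'_add_const A' hA'ne (fun α => c α + ⟪α, x'⟫_ℝ) (T * ⟪ξ, w⟫_ℝ))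
      have key3 : ∀ α ∈ A, α ∉ A' → c α + ⟪α, x⟫_ℝ ≤ q' x := by
        intro α hα hα'
        have hne : ⟪α - ξ, w⟫_ℝ ≠ 0 := fun h => hα' (Finset.mem_filter.mpr ⟨hα, h⟩)
        have hneg : ⟪α - ξ, w⟫_ℝ < 0 := lt_of_le_of_ne (hwle α hα) hne
        have hTge : (c α + ⟪α, x'⟫_ℝ - q' x') / (-⟪α - ξ, w⟫_ℝ) ≤ T :=
          le_trans (Finset.le_sup'
            (fun α => (c α + ⟪α, x'⟫_ℝ - q' x') / (-⟪α - ξ, w⟫_ℝ))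
            (Finset.mem_sdiff.mpr ⟨hα, hα'⟩)) (le_max_right _ _)
        have hposneg : 0 < -⟪α - ξ, w⟫_ℝ := by linarith
        have hmul : c α + ⟪α, x'⟫_ℝ - q' x' ≤ T * (-⟪α - ξ, w⟫_ℝ) :=
          (div_le_iff₀ hposneg).mp hTge
        have hsplit : ⟪α, w⟫_ℝ = ⟪α - ξ, w⟫_ℝ + ⟪ξ, w⟫_ℝ := by
          rw [inner_sub_left]; ring
        rw [hterm α, hsplit, key2]
        nlinarith
      have key4 : (A.sup' hA fun α => c α + ⟪α, x⟫_ℝ) = q' x := by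
        apply le_antisymm
        · apply Finset.sup'_le
          intro α hα
          by_cases hα' : α ∈ A'
          · exact Finset.le_sup' (fun α => c α + ⟪α, x⟫_ℝ) hα'
          · exact key3 α hα hα'
        · exact Finset.sup'_le _ _ fun α hα =>
            Finset.le_sup' (fun α => c α + ⟪α, x⟫_ℝ) (hA'sub hα)
      refine ⟨x, fun y => ?_⟩
      have hq'le : q' y ≤ A.sup' hA fun α => c α + ⟪α, y⟫_ℝ :=
        Finset.sup'_le _ _ fun α hα =>
          Finset.le_sup' (fun α => c α + ⟪α, y⟫_ℝ) (hA'sub hα)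
      have hinner : ⟪ξ, y - x⟫_ℝ = ⟪ξ, y - x'⟫_ℝ - T * ⟪ξ, w⟫_ℝ := by
        rw [hx]
        have h1 : y - (x' + T • w) = (y - x') - T • w := by abel
        rw [h1, inner_sub_right, real_inner_smul_right]
      rw [hinner, key4, key2]
      have h2 := hx' y
      linarith
    · -- Case 1: coercive case; minimize over the span.
      push_neg at hcase
      set g : EuclideanSpace ℝ (Fin d) → ℝ :=
        fun y => A.sup' hA fun α => c α + ⟪α - ξ, y⟫_ℝ with hg
      have hgval : ∀ y, (A.sup' hA fun α => c α + ⟪α, y⟫_ℝ) = g y + ⟪ξ, y⟫_ℝ := by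
        intro y
        have h1 : (A.sup' hA fun α => c α + ⟪α, y⟫_ℝ)
            = A.sup' hA fun α => (c α + ⟪α - ξ, y⟫_ℝ) + ⟪ξ, y⟫_ℝ := by
          apply Finset.sup'_congr hA rfl
          intro α _
          rw [inner_sub_left]
          ring
        exact h1.trans (sup'_add_const A hA (fun α => c α + ⟪α - ξ, y⟫_ℝ) ⟪ξ, y⟫_ℝ)
      suffices hmin : ∃ x : EuclideanSpace ℝ (Fin d), ∀ y, g x ≤ g y by
        obtain ⟨x, hxm⟩ := hmin
        refine ⟨x, fun y => ?_⟩
        rw [hgval y, hgval x, inner_sub_right]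
        have h3 := hxm y
        linarith
      by_cases htriv : ∀ α ∈ A, α = ξ
      · refine ⟨0, fun y => le_of_eq ?_⟩
        have hconst : ∀ z : EuclideanSpace ℝ (Fin d), g z = A.sup' hA c := by
          intro z
          apply Finset.sup'_congr hA rfl
          intro α hα
          rw [htriv α hα]
          simp
        rw [hconst 0, hconst y]
      · push_neg at htriv
        obtain ⟨α₁, hα₁A, hα₁⟩ := htriv
        have hα₁V : α₁ - ξ ∈ V := Submodule.subset_span ⟨α₁, hα₁A, rfl⟩
        have hα₁ne : α₁ - ξ ≠ 0 := sub_ne_zero.mpr hα₁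
        have hVclosed : IsClosed (V : Set (EuclideanSpace ℝ (Fin d))) :=
          Submodule.closed_of_finiteDimensional V
        -- continuous functions
        have hgcont : Continuous g := by
          rw [hg]
          apply Continuous.finset_sup'_apply hA
          intro α _
          exact continuous_const.add (Continuous.inner continuous_const continuous_id)
        set φ : EuclideanSpace ℝ (Fin d) → ℝ :=
          fun u => A.sup' hA fun α => ⟪α - ξ, u⟫_ℝ with hφ
        have hφcont : Continuous φ := by
          rw [hφ]
          apply Continuous.finset_sup'_apply hA
          intro α _
          exact Continuous.inner continuous_const continuous_id
        set S : Set (EuclideanSpace ℝ (Fin d)) :=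
          Metric.sphere (0 : EuclideanSpace ℝ (Fin d)) 1 ∩ (V : Set (EuclideanSpace ℝ (Fin d)))
          with hS
        have hScompact : IsCompact S := (isCompact_sphere 0 1).inter_right hVclosed
        have hSne : S.Nonempty := by
          refine ⟨‖α₁ - ξ‖⁻¹ • (α₁ - ξ), ?_, ?_⟩
          · simp [norm_smul, inv_mul_cancel₀ (norm_ne_zero_iff.mpr hα₁ne)]
          · exact V.smul_mem _ hα₁V
        obtain ⟨u₀, hu₀S, hu₀min⟩ := hScompact.exists_isMinOn hSne hφcont.continuousOn
        set ε : ℝ := φ u₀ with hεdef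
        have hu₀V : u₀ ∈ V := hu₀S.2
        have hu₀norm : ‖u₀‖ = 1 := by simpa using hu₀S.1
        have hu₀ne : u₀ ≠ 0 := fun h => by simp [h] at hu₀norm
        have hε : 0 < ε := by
          obtain ⟨α, hαA, hαpos⟩ := hcase u₀ hu₀V hu₀ne
          have hle : ⟪α - ξ, u₀⟫_ℝ ≤ ε := Finset.le_sup' (fun α => ⟪α - ξ, u₀⟫_ℝ) hαA
          linarith
        set m : ℝ := A.inf' hA c with hm
        have hco : ∀ y ∈ V, m + ε * ‖y‖ ≤ g y := by
          intro y hyV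
          by_cases hy0 : y = 0
          · obtain ⟨a, ha⟩ := hA
            have h1 : m ≤ c a := Finset.inf'_le c ha
            have h2 : c a + ⟪a - ξ, y⟫_ℝ ≤ g y :=
              Finset.le_sup' (fun α => c α + ⟪α - ξ, y⟫_ℝ) ha
            rw [hy0] at h2 ⊢
            simp only [inner_zero_right, add_zero] at h2
            simp only [norm_zero, mul_zero, add_zero]
            linarith
          · set u : EuclideanSpace ℝ (Fin d) := ‖y‖⁻¹ • y with hu
            have hyn : ‖y‖ ≠ 0 := norm_ne_zero_iff.mpr hy0
            have huS : u ∈ S := by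
              constructor
              · simp [hu, norm_smul, inv_mul_cancel₀ hyn]
              · exact V.smul_mem _ hyV
            have hεu : ε ≤ φ u := hu₀min huS
            obtain ⟨α', hα', hφu⟩ := Finset.exists_mem_eq_sup' hA
              (fun α => ⟪α - ξ, u⟫_ℝ)
            have hφu' : φ u = ⟪α' - ξ, u⟫_ℝ := hφu
            have hyu : y = ‖y‖ • u := by
              rw [hu, smul_smul, mul_inv_cancel₀ hyn, one_smul]
            have hinner : ⟪α' - ξ, y⟫_ℝ = ‖y‖ * φ u := by
              conv_lhs => rw [hyu]
              rw [real_inner_smul_right, hφu']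
            have h1 : m ≤ c α' := Finset.inf'_le c hα'
            have h2 : c α' + ⟪α' - ξ, y⟫_ℝ ≤ g y :=
              Finset.le_sup' (fun α => c α + ⟪α - ξ, y⟫_ℝ) hα'
            have h3 : ε * ‖y‖ ≤ ‖y‖ * φ u := by
              rw [mul_comm]
              exact mul_le_mul_of_nonneg_left hεu (norm_nonneg y)
            rw [hinner] at h2
            linarith
        set R : ℝ := (g 0 - m) / ε + 1 with hR
        have hg0 : m ≤ g 0 := by
          have h1 := hco 0 (V.zero_mem)
          simpa using h1
        have hRdiv : 0 ≤ (g 0 - m) / ε := div_nonneg (by linarith) (le_of_lt hε)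
        have hR0 : 0 < R := by rw [hR]; linarith
        set K : Set (EuclideanSpace ℝ (Fin d)) :=
          Metric.closedBall (0 : EuclideanSpace ℝ (Fin d)) R
            ∩ (V : Set (EuclideanSpace ℝ (Fin d))) with hK
        have hKcompact : IsCompact K := (isCompact_closedBall 0 R).inter_right hVclosed
        have hKne : K.Nonempty :=
          ⟨0, Metric.mem_closedBall_self (le_of_lt hR0), V.zero_mem⟩
        obtain ⟨x, hxK, hxmin⟩ := hKcompact.exists_isMinOn hKne hgcont.continuousOn
        have hεR : ε * R = (g 0 - m) + ε := by
          rw [hR, mul_add, mul_one, mul_div_cancel₀ _ (ne_of_gt hε)]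
        have hVmin : ∀ y ∈ V, g x ≤ g y := by
          intro y hyV
          by_cases hyR : ‖y‖ ≤ R
          · exact hxmin ⟨by simpa [Metric.mem_closedBall, dist_zero_right] using hyR, hyV⟩
          · push_neg at hyR
            have h1 : m + ε * ‖y‖ ≤ g y := hco y hyV
            have h2 : ε * R < ε * ‖y‖ := mul_lt_mul_of_pos_left hyR hε
            have h3 : g x ≤ g 0 :=
              hxmin ⟨Metric.mem_closedBall_self (le_of_lt hR0), V.zero_mem⟩
            linarith
        refine ⟨x, fun y => ?_⟩
        have hgy : g y = g ((Submodule.orthogonalProjectionOnto V y : EuclideanSpace ℝ (Fin d))) := by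
          rw [hg]
          apply Finset.sup'_congr hA rfl
          intro α hα
          have hαV : α - ξ ∈ V := Submodule.subset_span ⟨α, hα, rfl⟩
          have horth : ⟪α - ξ, y - (Submodule.orthogonalProjectionOnto V y : EuclideanSpace ℝ (Fin d))⟫_ℝ
              = 0 := by
            exact (Submodule.sub_starProjection_mem_orthogonal (K := V) y) (α - ξ) hαV
          rw [inner_sub_right] at horth
          have h4 : ⟪α - ξ, y⟫_ℝ
              = ⟪α - ξ, (Submodule.orthogonalProjectionOnto V y : EuclideanSpace ℝ (Fin d))⟫_ℝ := by
            linarith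
          rw [h4]
        rw [hgy]
        exact hVmin _ (Submodule.orthogonalProjectionOnto V y).2

/-- For a tropical polynomial `q(x) = max_{α ∈ A} (c(α) + ⟨α, x⟩)`, the union of all
subdifferentials of `q` equals the Newton polytope `convexHull A`. -/
theorem iUnion_subgrad_tropical_eq_newtonPolytope
    (d : ℕ) (A : Finset (EuclideanSpace ℝ (Fin d))) (hA : A.Nonempty)
    (c : EuclideanSpace ℝ (Fin d) → ℝ) (q : EuclideanSpace ℝ (Fin d) → ℝ)
    (hq : ∀ x, q x = A.sup' hA fun α => c α + ⟪α, x⟫_ℝ) :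
    (⋃ x : EuclideanSpace ℝ (Fin d), subgrad q x)
      = convexHull ℝ (A : Set (EuclideanSpace ℝ (Fin d))) := by
  ext ξ
  simp only [Set.mem_iUnion]
  constructor
  · rintro ⟨x, hx⟩
    by_contra hc
    obtain ⟨f, u, hfa, hfξ⟩ := geometric_hahn_banach_closed_point
      (convex_convexHull ℝ _) (A.finite_toSet.isClosed_convexHull ℝ) hc
    set v : EuclideanSpace ℝ (Fin d) := (toDual ℝ _).symm f with hv
    have hvf : ∀ y, ⟪v, y⟫_ℝ = f y := fun y => InnerProductSpace.toDual_symm_apply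
    have h1 : ⟪ξ, v⟫_ℝ ≤ q (x + v) - q x := by
      have h := hx (x + v)
      simpa using h
    have h2 : q (x + v) ≤ q x + u := by
      rw [hq]
      apply Finset.sup'_le
      intro α hα
      have hαc : (α : EuclideanSpace ℝ (Fin d)) ∈ convexHull ℝ
          (A : Set (EuclideanSpace ℝ (Fin d))) := subset_convexHull ℝ _ hα
      have hfα : f α < u := hfa α hαc
      have hαv : ⟪α, v⟫_ℝ < u := by
        rw [real_inner_comm, hvf]
        exact hfα
      have hle : c α + ⟪α, x⟫_ℝ ≤ q x := by
        rw [hq]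
        exact Finset.le_sup' (fun α => c α + ⟪α, x⟫_ℝ) hα
      rw [inner_add_right]
      linarith
    have h3 : u < ⟪ξ, v⟫_ℝ := by
      rw [real_inner_comm, hvf]
      exact hfξ
    linarith
  · intro hξ
    obtain ⟨x, hx⟩ := exists_subgrad_aux d A.card A le_rfl hA c ξ hξ
    refine ⟨x, fun y => ?_⟩
    rw [hq y, hq x]
    exact hx y

end
end
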